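/- arXiv:2408.15417 — 7 statements merged into one kernel-verified Lean document; each statement's English description precedes it below -/
import Mathlib

section
/- For every λ > 0, the optimal value of the NTP-UFM problem, min over W ∈ ℝ^{V×d} and H ∈ ℝ^{d×m} of CE(WH) + (λ/2)‖W‖_F² + (λ/2)‖H‖_F², equals the optimal value of the rank-constrained nuclear-norm-regularized logit problem, min over L ∈ ℝ^{V×m} with rank(L) ≤ d of CE(L) + λ‖L‖_*. -/
open Filter Topology Matrix

noncomputable section

/-- Frobenius norm of a real matrix. -/
def frobNorm {a b : ℕ} (A : Matrix (Fin a) (Fin b) ℝ) : ℝ :=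
  Real.sqrt (∑ i, ∑ j, (A i j) ^ 2)

/-- Nuclear norm: sum of the singular values of `A`, i.e. of the square roots of the
eigenvalues of `Aᴴ * A`. -/
def nuclearNorm {a b : ℕ} (A : Matrix (Fin a) (Fin b) ℝ) : ℝ :=
  ∑ i, Real.sqrt ((Matrix.isHermitian_conjTranspose_mul_self A).eigenvalues i)

/-- The NTP cross-entropy loss. -/
def CEloss {V m : ℕ} (piv : Fin m → ℝ) (p : Fin m → Fin V → ℝ)
    (L : Matrix (Fin V) (Fin m) ℝ) : ℝ :=
  - ∑ j, piv j * ∑ z ∈ Finset.univ.filter (fun z => 0 < p j z),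
      p j z * Real.log (Real.exp (L z j) / ∑ v, Real.exp (L v j))

/-! The nuclear norm is a minimum over factorizations,
`‖L‖_* = min {(‖W‖_F² + ‖H‖_F²) / 2 : W * H = L}`, attained with inner dimension `rank L`;
so both problems minimize the same quantity. The bound `‖W * H‖_* ≤ (‖W‖_F² + ‖H‖_F²) / 2`
follows by writing `σ_j = (Wᵀ u_j) ⬝ (H v_j)` with singular vectors `u_j`, `v_j`, applying AM-GM,
and summing with Bessel's inequality for the orthonormal families `(u_j)` and `(v_j)`. Equality
is attained by the balanced factors `U √Σ` and `√Σ Vᵀ` of a compact singular value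
decomposition. -/

theorem Function.Injective.sum_extend_mul_extend {ι κ R : Type*} [Fintype ι] [Fintype κ]
    [NonUnitalNonAssocSemiring R] {e : ι → κ} (he : Function.Injective e) (f g : ι → R) :
    ∑ k, Function.extend e f 0 k * Function.extend e g 0 k = ∑ j, f j * g j :=
  (Fintype.sum_of_injective e he _ _
    (fun k hk => by simp [Function.extend_apply' _ _ _ hk]) (fun j => by simp [he.extend_apply])).symm

theorem Function.Injective.sum_sq_extend {ι κ n : Type*} [Fintype ι] [Fintype κ] [Fintype n]
    {e : ι → κ} (he : Function.Injective e) (c : ι → n → ℝ) :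
    ∑ z, ∑ k, Function.extend e (fun j => c j z) 0 k ^ 2 = ∑ j, c j ⬝ᵥ c j := by
  simp only [sq, he.sum_extend_mul_extend, dotProduct]
  exact Finset.sum_comm

section Orthonormal

variable {ι m n : Type*} [Fintype m] [Fintype n]

theorem dotProduct_le_half_add (x y : n → ℝ) : x ⬝ᵥ y ≤ (x ⬝ᵥ x + y ⬝ᵥ y) / 2 := by
  have h : 0 ≤ (x - y) ⬝ᵥ (x - y) := Finset.sum_nonneg fun i _ => mul_self_nonneg _
  simp only [sub_dotProduct, dotProduct_sub, dotProduct_comm y x] at h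
  linarith

theorem sum_sq_dotProduct_le [DecidableEq ι] {s : Finset ι} {u : ι → n → ℝ}
    (hu : ∀ j ∈ s, ∀ k ∈ s, u j ⬝ᵥ u k = if j = k then 1 else 0) (x : n → ℝ) :
    ∑ j ∈ s, (x ⬝ᵥ u j) ^ 2 ≤ x ⬝ᵥ x := by
  have hon : Orthonormal ℝ fun j : s => WithLp.toLp 2 (u j) := by
    refine orthonormal_iff_ite.mpr fun j k => ?_
    rw [EuclideanSpace.inner_toLp_toLp, star_trivial, hu k k.2 j j.2]
    simp only [eq_comm, Subtype.ext_iff]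
  have h := hon.sum_inner_products_le (WithLp.toLp 2 x) (s := Finset.univ)
  simp only [EuclideanSpace.inner_toLp_toLp, star_trivial, Real.norm_eq_abs, sq_abs,
    ← real_inner_self_eq_norm_sq] at h
  rwa [Finset.sum_coe_sort s (fun j => (x ⬝ᵥ u j) ^ 2)] at h

theorem sum_mulVec_dotProduct_le [DecidableEq ι] {s : Finset ι} {u : ι → n → ℝ}
    (hu : ∀ j ∈ s, ∀ k ∈ s, u j ⬝ᵥ u k = if j = k then 1 else 0) (A : Matrix m n ℝ) :
    ∑ j ∈ s, (A *ᵥ u j) ⬝ᵥ (A *ᵥ u j) ≤ ∑ i, ∑ k, A i k ^ 2 := by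
  calc ∑ j ∈ s, (A *ᵥ u j) ⬝ᵥ (A *ᵥ u j) = ∑ i, ∑ j ∈ s, (A i ⬝ᵥ u j) ^ 2 := by
        simp only [dotProduct, mulVec, ← sq]
        exact Finset.sum_comm
    _ ≤ ∑ i, A i ⬝ᵥ A i := Finset.sum_le_sum fun i _ => sum_sq_dotProduct_le hu (A i)
    _ = ∑ i, ∑ k, A i k ^ 2 := by simp only [dotProduct, sq]

end Orthonormal

namespace Matrix

variable {m n : Type*} [Fintype m] [Fintype n] [DecidableEq n] (M : Matrix m n ℝ)

def singularValue (j : n) : ℝ :=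
  √((isHermitian_conjTranspose_mul_self M).eigenvalues j)

def rightSingularVector (j : n) : n → ℝ :=
  ⇑((isHermitian_conjTranspose_mul_self M).eigenvectorBasis j)

-- `0` when `σ_j = 0`, as `0⁻¹ = 0`.
def leftSingularVector (j : n) : m → ℝ :=
  (M.singularValue j)⁻¹ • M *ᵥ M.rightSingularVector j

theorem singularValue_nonneg (j : n) : 0 ≤ M.singularValue j := Real.sqrt_nonneg _

theorem singularValue_sq (j : n) :
    M.singularValue j ^ 2 = (isHermitian_conjTranspose_mul_self M).eigenvalues j :=
  Real.sq_sqrt (eigenvalues_conjTranspose_mul_self_nonneg M j)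

theorem card_singularValue_ne_zero : Fintype.card {j // M.singularValue j ≠ 0} = M.rank := by
  rw [← rank_conjTranspose_mul_self,
    (isHermitian_conjTranspose_mul_self M).rank_eq_card_non_zero_eigs]
  refine Fintype.card_congr (Equiv.subtypeEquivRight fun j => ?_)
  rw [singularValue, Real.sqrt_ne_zero (eigenvalues_conjTranspose_mul_self_nonneg M j)]

theorem rightSingularVector_dotProduct (j k : n) :
    M.rightSingularVector j ⬝ᵥ M.rightSingularVector k = if j = k then 1 else 0 := by
  have h := orthonormal_iff_ite.mp
    (isHermitian_conjTranspose_mul_self M).eigenvectorBasis.orthonormal k j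
  rw [EuclideanSpace.inner_eq_star_dotProduct, star_trivial] at h
  exact h.trans (if_congr eq_comm rfl rfl)

theorem sum_rightSingularVector_mul_rightSingularVector (k t : n) :
    ∑ j, M.rightSingularVector j k * M.rightSingularVector j t = if k = t then 1 else 0 := by
  have h := (isHermitian_conjTranspose_mul_self M).eigenvectorBasis.sum_inner_mul_inner
    (EuclideanSpace.single k (1 : ℝ)) (EuclideanSpace.single t (1 : ℝ))
  simpa [EuclideanSpace.inner_single_left, EuclideanSpace.inner_single_right,
    PiLp.single_apply, eq_comm (a := t), rightSingularVector] using h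

theorem sum_mulVec_rightSingularVector_mul (z : m) (t : n) :
    ∑ j, (M *ᵥ M.rightSingularVector j) z * M.rightSingularVector j t = M z t := by
  simp only [mulVec, dotProduct, Finset.sum_mul, mul_assoc]
  rw [Finset.sum_comm]
  simp only [← Finset.mul_sum, sum_rightSingularVector_mul_rightSingularVector]
  simp

theorem transpose_mul_self_mulVec_rightSingularVector (j : n) :
    (Mᵀ * M) *ᵥ M.rightSingularVector j = M.singularValue j ^ 2 • M.rightSingularVector j := by
  rw [singularValue_sq, ← conjTranspose_eq_transpose_of_trivial]
  exact (isHermitian_conjTranspose_mul_self M).mulVec_eigenvectorBasis j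

theorem mulVec_rightSingularVector_dotProduct (j k : n) :
    (M *ᵥ M.rightSingularVector j) ⬝ᵥ (M *ᵥ M.rightSingularVector k)
      = if j = k then M.singularValue j ^ 2 else 0 := by
  rw [dotProduct_mulVec, ← mulVec_transpose, mulVec_mulVec,
    transpose_mul_self_mulVec_rightSingularVector, smul_dotProduct, rightSingularVector_dotProduct]
  split_ifs <;> simp

theorem mulVec_rightSingularVector_eq_zero {j : n} (hj : M.singularValue j = 0) :
    M *ᵥ M.rightSingularVector j = 0 := by
  rw [← dotProduct_self_eq_zero, mulVec_rightSingularVector_dotProduct, if_pos rfl, hj]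
  norm_num

theorem singularValue_smul_leftSingularVector (j : n) :
    M.singularValue j • M.leftSingularVector j = M *ᵥ M.rightSingularVector j := by
  by_cases hj : M.singularValue j = 0
  · rw [hj, zero_smul, mulVec_rightSingularVector_eq_zero M hj]
  · rw [leftSingularVector, smul_smul, mul_inv_cancel₀ hj, one_smul]

theorem leftSingularVector_dotProduct {j : n} (hj : M.singularValue j ≠ 0) (k : n) :
    M.leftSingularVector j ⬝ᵥ M.leftSingularVector k = if j = k then 1 else 0 := by
  rw [leftSingularVector, leftSingularVector, smul_dotProduct, dotProduct_smul,
    mulVec_rightSingularVector_dotProduct]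
  split_ifs with h
  · subst h
    simp only [smul_eq_mul]
    field_simp
  · simp

theorem leftSingularVector_dotProduct_mulVec (j : n) :
    M.leftSingularVector j ⬝ᵥ (M *ᵥ M.rightSingularVector j) = M.singularValue j := by
  rw [leftSingularVector, smul_dotProduct, mulVec_rightSingularVector_dotProduct, if_pos rfl,
    smul_eq_mul, inv_mul_eq_div, sq, mul_self_div_self]

end Matrix

section NuclearNorm

variable {a b d : ℕ}

theorem frobNorm_sq (A : Matrix (Fin a) (Fin b) ℝ) : frobNorm A ^ 2 = ∑ i, ∑ j, A i j ^ 2 :=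
  Real.sq_sqrt (Finset.sum_nonneg fun _ _ => Finset.sum_nonneg fun _ _ => sq_nonneg _)

theorem nuclearNorm_eq_sum_singularValue (A : Matrix (Fin a) (Fin b) ℝ) :
    nuclearNorm A = ∑ j, A.singularValue j := rfl

theorem nuclearNorm_mul_le (W : Matrix (Fin a) (Fin d) ℝ) (H : Matrix (Fin d) (Fin b) ℝ) :
    nuclearNorm (W * H) ≤ (frobNorm W ^ 2 + frobNorm H ^ 2) / 2 := by
  set M := W * H
  set S := Finset.univ.filter fun j => M.singularValue j ≠ 0
  have hσ : ∀ j, M.singularValue j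
      = (Wᵀ *ᵥ M.leftSingularVector j) ⬝ᵥ (H *ᵥ M.rightSingularVector j) := fun j => by
    rw [← M.leftSingularVector_dotProduct_mulVec, mulVec_transpose, ← dotProduct_mulVec,
      mulVec_mulVec]
  have hW : ∑ j ∈ S, (Wᵀ *ᵥ M.leftSingularVector j) ⬝ᵥ (Wᵀ *ᵥ M.leftSingularVector j)
      ≤ frobNorm W ^ 2 := by
    rw [frobNorm_sq, Finset.sum_comm]
    exact sum_mulVec_dotProduct_le
      (fun j hj k _ => M.leftSingularVector_dotProduct (Finset.mem_filter.mp hj).2 k) Wᵀ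
  have hH : ∑ j ∈ S, (H *ᵥ M.rightSingularVector j) ⬝ᵥ (H *ᵥ M.rightSingularVector j)
      ≤ frobNorm H ^ 2 := by
    rw [frobNorm_sq]
    exact sum_mulVec_dotProduct_le (fun j _ k _ => M.rightSingularVector_dotProduct j k) H
  calc nuclearNorm M = ∑ j ∈ S, M.singularValue j := by
        rw [nuclearNorm_eq_sum_singularValue, Finset.sum_filter_ne_zero]
    _ ≤ ∑ j ∈ S, ((Wᵀ *ᵥ M.leftSingularVector j) ⬝ᵥ (Wᵀ *ᵥ M.leftSingularVector j)
          + (H *ᵥ M.rightSingularVector j) ⬝ᵥ (H *ᵥ M.rightSingularVector j)) / 2 :=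
        Finset.sum_le_sum fun j _ => (hσ j).trans_le (dotProduct_le_half_add _ _)
    _ ≤ (frobNorm W ^ 2 + frobNorm H ^ 2) / 2 := by
        rw [← Finset.sum_div, Finset.sum_add_distrib]
        linarith

theorem exists_mul_eq_and_frobNorm_sq_eq_nuclearNorm (L : Matrix (Fin a) (Fin b) ℝ)
    (hL : L.rank ≤ d) :
    ∃ (W : Matrix (Fin a) (Fin d) ℝ) (H : Matrix (Fin d) (Fin b) ℝ),
      W * H = L ∧ frobNorm W ^ 2 = nuclearNorm L ∧ frobNorm H ^ 2 = nuclearNorm L := by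
  obtain ⟨e⟩ : Nonempty ({j // L.singularValue j ≠ 0} ↪ Fin d) :=
    Function.Embedding.nonempty_of_card_le (by rwa [card_singularValue_ne_zero, Fintype.card_fin])
  set S := {j // L.singularValue j ≠ 0}
  have hsum : ∀ f : Fin b → ℝ, (∀ j, L.singularValue j = 0 → f j = 0) →
      ∑ j : S, f j = ∑ j, f j := fun f hf =>
    Fintype.sum_of_injective Subtype.val Subtype.val_injective _ _
      (fun j hj => hf j (by_contra fun h => hj ⟨⟨j, h⟩, rfl⟩)) (fun _ => rfl)
  -- the balanced factors `U √Σ` and `√Σ Vᵀ` of a compact SVD, padded with zeros to width `d`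
  set cW : S → Fin a → ℝ := fun j => √(L.singularValue j) • L.leftSingularVector j
  set cH : S → Fin b → ℝ := fun j => √(L.singularValue j) • L.rightSingularVector j
  have hσ : ∀ j : S, √(L.singularValue j) * √(L.singularValue j) = L.singularValue j :=
    fun j => Real.mul_self_sqrt (L.singularValue_nonneg j)
  refine ⟨of fun z i => Function.extend e (fun j => cW j z) 0 i,
    of fun i t => Function.extend e (fun j => cH j t) 0 i, ?_, ?_, ?_⟩
  · ext z t
    simp only [mul_apply, of_apply, e.injective.sum_extend_mul_extend]
    rw [← L.sum_mulVec_rightSingularVector_mul z t, ← hsum]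
    · refine Finset.sum_congr rfl fun j _ => ?_
      rw [← L.singularValue_smul_leftSingularVector, ← hσ]
      simp only [cW, cH, Pi.smul_apply, smul_eq_mul]
      ring
    · intro j hj
      rw [L.mulVec_rightSingularVector_eq_zero hj, Pi.zero_apply, zero_mul]
  · have hW : ∀ j : S, cW j ⬝ᵥ cW j = L.singularValue j := fun j => by
      rw [smul_dotProduct, dotProduct_smul, L.leftSingularVector_dotProduct j.2, if_pos rfl,
        smul_eq_mul, smul_eq_mul, mul_one, hσ]
    rw [frobNorm_sq]
    simp only [of_apply, e.injective.sum_sq_extend, hW]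
    exact hsum _ fun _ => id
  · have hH : ∀ j : S, cH j ⬝ᵥ cH j = L.singularValue j := fun j => by
      rw [smul_dotProduct, dotProduct_smul, rightSingularVector_dotProduct, if_pos rfl,
        smul_eq_mul, smul_eq_mul, mul_one, hσ]
    rw [frobNorm_sq, Finset.sum_comm]
    simp only [of_apply, e.injective.sum_sq_extend, hH]
    exact hsum _ fun _ => id

theorem sInf_factored_eq_sInf_rank_le (f : Matrix (Fin a) (Fin b) ℝ → ℝ) {lam : ℝ}
    (hlam : 0 ≤ lam) :
    sInf {c : ℝ | ∃ (W : Matrix (Fin a) (Fin d) ℝ) (H : Matrix (Fin d) (Fin b) ℝ),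
        c = f (W * H) + lam / 2 * frobNorm W ^ 2 + lam / 2 * frobNorm H ^ 2}
      =
    sInf {c : ℝ | ∃ L : Matrix (Fin a) (Fin b) ℝ, L.rank ≤ d ∧ c = f L + lam * nuclearNorm L} := by
  refine csInf_eq_csInf_of_forall_exists_le ?_ ?_
  · rintro _ ⟨W, H, rfl⟩
    refine ⟨_, ⟨W * H, (rank_mul_le_left W H).trans (rank_le_width W), rfl⟩, ?_⟩
    nlinarith [nuclearNorm_mul_le W H]
  · rintro _ ⟨L, hL, rfl⟩
    obtain ⟨W, H, hWH, hW, hH⟩ := exists_mul_eq_and_frobNorm_sq_eq_nuclearNorm L hL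
    exact ⟨_, ⟨W, H, rfl⟩, by rw [hWH, hW, hH]; linarith⟩

end NuclearNorm

theorem stmt_0_general (V m d : ℕ) (piv : Fin m → ℝ) (p : Fin m → Fin V → ℝ) (lam : ℝ) (hlam : 0 < lam) :
    sInf {c : ℝ | ∃ (W : Matrix (Fin V) (Fin d) ℝ) (H : Matrix (Fin d) (Fin m) ℝ),
        c = CEloss piv p (W * H) + lam / 2 * frobNorm W ^ 2 + lam / 2 * frobNorm H ^ 2}
      =
    sInf {c : ℝ | ∃ L : Matrix (Fin V) (Fin m) ℝ, L.rank ≤ d ∧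
        c = CEloss piv p L + lam * nuclearNorm L} :=
  sInf_factored_eq_sInf_rank_le (CEloss piv p) hlam.le

/-- for every λ > 0, the optimal value of the NTP-UFM problem equals the optimal
value of the rank-constrained nuclear-norm-regularized logit problem. -/
theorem stmt_0 (V m d : ℕ) (hV : 2 ≤ V) (hm : 0 < m) (hd : 0 < d)
    (piv : Fin m → ℝ) (hpiv : ∀ j, 0 < piv j) (hpisum : ∑ j, piv j = 1)
    (p : Fin m → Fin V → ℝ) (hp : ∀ j z, 0 ≤ p j z) (hpsum : ∀ j, ∑ z, p j z = 1)
    (lam : ℝ) (hlam : 0 < lam) :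
    sInf {c : ℝ | ∃ (W : Matrix (Fin V) (Fin d) ℝ) (H : Matrix (Fin d) (Fin m) ℝ),
        c = CEloss piv p (W * H) + lam / 2 * frobNorm W ^ 2 + lam / 2 * frobNorm H ^ 2}
      =
    sInf {c : ℝ | ∃ L : Matrix (Fin V) (Fin m) ℝ, L.rank ≤ d ∧
        c = CEloss piv p L + lam * nuclearNorm L} :=
  stmt_0_general V m d piv p lam hlam
end
end

section
/- In the symmetric setting, the centered support matrix S̃ = (I_V − (1/V)1_V 1_Vᵀ) S is the unique minimizer of the NTP-SVM program. -/
open Filter Topology Matrix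

noncomputable section

/-- The (0/1) support matrix of a family of support sets. -/
def Smat {V m : ℕ} (Ssets : Fin m → Finset (Fin V)) : Matrix (Fin V) (Fin m) ℝ :=
  Matrix.of fun z j => if z ∈ Ssets j then (1 : ℝ) else 0

/-- The centered support matrix `S̃ = (I_V − (1/V) 1 1ᵀ) S`. -/
def Stil {V m : ℕ} (Ssets : Fin m → Finset (Fin V)) : Matrix (Fin V) (Fin m) ℝ :=
  ((1 : Matrix (Fin V) (Fin V) ℝ) - (V : ℝ)⁻¹ • Matrix.of fun _ _ => (1 : ℝ)) * Smat Ssets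

/-- Feasibility for the NTP-SVM program with support sets `Ssets`. -/
def svmFeasibleS {V m : ℕ} (Ssets : Fin m → Finset (Fin V))
    (L : Matrix (Fin V) (Fin m) ℝ) : Prop :=
  (∀ j, ∀ z ∈ Ssets j, ∀ z' ∈ Ssets j, L z j = L z' j) ∧
  (∀ j, ∀ z ∈ Ssets j, ∀ v, v ∉ Ssets j → 1 ≤ L z j - L v j)

/-!
Symmetry forces `S Sᵀ = a I + b 𝟙𝟙ᵀ` with `a > 0`, hence `S̃ S̃ᵀ = a (I - 𝟙𝟙ᵀ/V)` and
`M = S̃ / √a` satisfies `(MᵀM)² = MᵀM`: `M` has operator norm at most one, so it is a dual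
certificate, `tr (Mᵀ L) ≤ ‖L‖_*` for all `L`, with equality at `L = S̃`. A feasible `L` has the form
`S + 𝟙 rᵀ - E` with `E ≥ 0` vanishing on the supports, and `tr (S̃ᵀ L) = tr (S̃ᵀ S̃) + (k/V) ∑ E`,
so `‖S̃‖_* = tr (Mᵀ S̃) ≤ tr (Mᵀ L) ≤ ‖L‖_*`. If equality holds, then `E = 0`, so the centred `L`
is `S̃`; and the columns of `L` lie in the range of `M`, so `L` is already centred.
-/

section Spectral

variable {n : Type*} [Fintype n]

lemma Matrix.IsHermitian.star_eigenvectorUnitary_mul_mul [DecidableEq n] {A : Matrix n n ℝ}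
    (hA : A.IsHermitian) :
    star (hA.eigenvectorUnitary : Matrix n n ℝ) * A * hA.eigenvectorUnitary =
      diagonal hA.eigenvalues := by
  have h := hA.conjStarAlgAut_star_eigenvectorUnitary
  rwa [Unitary.conjStarAlgAut_star_apply, RCLike.ofReal_real_eq_id, Function.id_comp] at h

lemma Matrix.IsHermitian.diag_le_one_of_isIdempotentElem {R : Matrix n n ℝ} (hR : R.IsHermitian)
    (hRR : IsIdempotentElem R) (i : n) : R i i ≤ 1 := by
  have hsq : R i i ^ 2 ≤ R i i := by
    calc R i i ^ 2 ≤ ∑ z, R z i ^ 2 :=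
          Finset.single_le_sum (f := fun z => R z i ^ 2) (fun _ _ => sq_nonneg _)
            (Finset.mem_univ i)
      _ = R i i := by
          conv_rhs => rw [← hRR.eq, mul_apply]
          refine Finset.sum_congr rfl fun z _ => ?_
          rw [sq, ← hR.apply i z, star_trivial]
  nlinarith

end Spectral

section CauchySchwarz

variable {n : Type*} [Fintype n]

lemma dotProduct_sub_sqrt_smul_self_le {x y : n → ℝ} (hy : y ⬝ᵥ y ≤ 1) :
    (x - √(x ⬝ᵥ x) • y) ⬝ᵥ (x - √(x ⬝ᵥ x) • y) ≤ 2 * √(x ⬝ᵥ x) * (√(x ⬝ᵥ x) - y ⬝ᵥ x) := by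
  have hx : √(x ⬝ᵥ x) ^ 2 = x ⬝ᵥ x := Real.sq_sqrt (dotProduct_star_self_nonneg x)
  simp only [dotProduct_sub, sub_dotProduct, dotProduct_smul, smul_dotProduct, smul_eq_mul,
    dotProduct_comm x y]
  nlinarith [Real.sqrt_nonneg (x ⬝ᵥ x)]

lemma dotProduct_le_sqrt_dotProduct_self {x y : n → ℝ} (hy : y ⬝ᵥ y ≤ 1) :
    y ⬝ᵥ x ≤ √(x ⬝ᵥ x) :=
  calc y ⬝ᵥ x ≤ √(y ⬝ᵥ y) * √(x ⬝ᵥ x) := by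
        simpa [dotProduct, sq] using Real.sum_mul_le_sqrt_mul_sqrt Finset.univ y x
    _ ≤ √(x ⬝ᵥ x) := mul_le_of_le_one_left (Real.sqrt_nonneg _) (Real.sqrt_le_one.mpr hy)

lemma eq_sqrt_smul_of_dotProduct_eq {x y : n → ℝ} (hy : y ⬝ᵥ y ≤ 1)
    (h : y ⬝ᵥ x = √(x ⬝ᵥ x)) : x = √(x ⬝ᵥ x) • y := by
  have hle := dotProduct_sub_sqrt_smul_self_le (x := x) hy
  rw [h, sub_self, mul_zero] at hle
  exact sub_eq_zero.mp <| dotProduct_self_eq_zero.mp <|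
    le_antisymm hle (dotProduct_star_self_nonneg _)

end CauchySchwarz

section ColumnBound

lemma conjTranspose_mul_apply_self {m n : Type*} [Fintype m] (N K : Matrix m n ℝ) (i : n) :
    (Nᴴ * K) i i = Nᵀ i ⬝ᵥ Kᵀ i := by
  simp [mul_apply, dotProduct]

variable {m n : Type*} [Fintype m] [Fintype n] {N : Matrix m n ℝ}

lemma dotProduct_transpose_self_le_one (hN : IsIdempotentElem (Nᴴ * N)) (i : n) :
    Nᵀ i ⬝ᵥ Nᵀ i ≤ 1 := by
  rw [← conjTranspose_mul_apply_self]
  exact (isHermitian_conjTranspose_mul_self N).diag_le_one_of_isIdempotentElem hN i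

lemma trace_conjTranspose_mul_le_sum_sqrt_diag (hN : IsIdempotentElem (Nᴴ * N))
    (K : Matrix m n ℝ) : trace (Nᴴ * K) ≤ ∑ i, √((Kᴴ * K) i i) := by
  refine Finset.sum_le_sum fun i _ => ?_
  rw [diag_apply, conjTranspose_mul_apply_self, conjTranspose_mul_apply_self]
  exact dotProduct_le_sqrt_dotProduct_self (dotProduct_transpose_self_le_one hN i)

lemma eq_mul_diagonal_of_trace_conjTranspose_mul_eq [DecidableEq n] (hN : IsIdempotentElem (Nᴴ * N))
    {K : Matrix m n ℝ} (h : trace (Nᴴ * K) = ∑ i, √((Kᴴ * K) i i)) :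
    K = N * diagonal fun i => √((Kᴴ * K) i i) := by
  have hcol : ∀ i, Nᵀ i ⬝ᵥ Kᵀ i = √(Kᵀ i ⬝ᵥ Kᵀ i) := by
    have hle : ∀ i ∈ Finset.univ, (Nᴴ * K) i i ≤ √((Kᴴ * K) i i) := fun i _ => by
      rw [conjTranspose_mul_apply_self, conjTranspose_mul_apply_self]
      exact dotProduct_le_sqrt_dotProduct_self (dotProduct_transpose_self_le_one hN i)
    intro i
    have := (Finset.sum_eq_sum_iff_of_le hle).mp h i (Finset.mem_univ i)
    rwa [conjTranspose_mul_apply_self, conjTranspose_mul_apply_self] at this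
  ext z i
  rw [mul_diagonal, conjTranspose_mul_apply_self, mul_comm]
  exact congrFun (eq_sqrt_smul_of_dotProduct_eq (dotProduct_transpose_self_le_one hN i) (hcol i)) z

end ColumnBound

section NuclearNorm

variable {a b : ℕ} {M : Matrix (Fin a) (Fin b) ℝ}

lemma IsIdempotentElem.conjTranspose_mul_self_mul_unitary (hM : IsIdempotentElem (Mᴴ * M))
    {U : Matrix (Fin b) (Fin b) ℝ} (hU : U ∈ unitaryGroup (Fin b) ℝ) :
    IsIdempotentElem ((M * U)ᴴ * (M * U)) := by
  have := hM.map (Unitary.conjStarAlgAut ℝ _ (Star.star (⟨U, hU⟩ : unitaryGroup (Fin b) ℝ)))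
  simpa [Matrix.mul_assoc, conjTranspose_mul, star_eq_conjTranspose] using this

lemma trace_conjTranspose_mul_mul_unitary (M L : Matrix (Fin a) (Fin b) ℝ)
    {U : Matrix (Fin b) (Fin b) ℝ} (hU : U ∈ unitaryGroup (Fin b) ℝ) :
    trace ((M * U)ᴴ * (L * U)) = trace (Mᴴ * L) := by
  rw [conjTranspose_mul, Matrix.mul_assoc, trace_mul_comm, Matrix.mul_assoc, Matrix.mul_assoc,
    ← star_eq_conjTranspose, Unitary.mul_star_self_of_mem hU, Matrix.mul_one]

lemma exists_nuclearNorm_eq_sum_sqrt_diag (L : Matrix (Fin a) (Fin b) ℝ) :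
    ∃ U ∈ unitaryGroup (Fin b) ℝ, nuclearNorm L = ∑ i, √(((L * U)ᴴ * (L * U)) i i) := by
  have hA := isHermitian_conjTranspose_mul_self L
  refine ⟨(hA.eigenvectorUnitary : Matrix (Fin b) (Fin b) ℝ), hA.eigenvectorUnitary.2, ?_⟩
  rw [conjTranspose_mul, ← star_eq_conjTranspose, Matrix.mul_assoc, ← Matrix.mul_assoc Lᴴ,
    ← Matrix.mul_assoc, hA.star_eigenvectorUnitary_mul_mul]
  simp [nuclearNorm]

lemma trace_conjTranspose_mul_le_nuclearNorm (hM : IsIdempotentElem (Mᴴ * M))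
    (L : Matrix (Fin a) (Fin b) ℝ) : trace (Mᴴ * L) ≤ nuclearNorm L := by
  obtain ⟨U, hU, hL⟩ := exists_nuclearNorm_eq_sum_sqrt_diag L
  rw [hL, ← trace_conjTranspose_mul_mul_unitary M L hU]
  exact trace_conjTranspose_mul_le_sum_sqrt_diag (hM.conjTranspose_mul_self_mul_unitary hU) _

lemma exists_eq_mul_of_trace_conjTranspose_mul_eq_nuclearNorm (hM : IsIdempotentElem (Mᴴ * M))
    {L : Matrix (Fin a) (Fin b) ℝ} (h : trace (Mᴴ * L) = nuclearNorm L) :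
    ∃ X : Matrix (Fin b) (Fin b) ℝ, L = M * X := by
  obtain ⟨U, hU, hL⟩ := exists_nuclearNorm_eq_sum_sqrt_diag L
  rw [hL, ← trace_conjTranspose_mul_mul_unitary M L hU] at h
  have hLU := eq_mul_diagonal_of_trace_conjTranspose_mul_eq
    (hM.conjTranspose_mul_self_mul_unitary hU) h
  refine ⟨U * diagonal (fun i => √(((L * U)ᴴ * (L * U)) i i)) * star U, ?_⟩
  rw [← Matrix.mul_assoc, ← Matrix.mul_assoc, ← hLU, Matrix.mul_assoc,
    Unitary.mul_star_self_of_mem hU, Matrix.mul_one]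

lemma nuclearNorm_eq_trace_div_sqrt {L : Matrix (Fin a) (Fin b) ℝ} {c : ℝ}
    (h : (Lᴴ * L) * (Lᴴ * L) = c • (Lᴴ * L)) : nuclearNorm L = trace (Lᴴ * L) / √c := by
  have hA := isHermitian_conjTranspose_mul_self L
  set A := Lᴴ * L
  set U : Matrix (Fin b) (Fin b) ℝ := ↑hA.eigenvectorUnitary
  set d := hA.eigenvalues
  have hdiag : diagonal d * diagonal d = c • diagonal d := by
    rw [← hA.star_eigenvectorUnitary_mul_mul]
    simp only [Matrix.mul_assoc]
    rw [← Matrix.mul_assoc U, Unitary.mul_star_self_of_mem hA.eigenvectorUnitary.2,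
      Matrix.one_mul, ← Matrix.mul_assoc A, h, Matrix.smul_mul, Matrix.mul_smul]
  have hsqrt : ∀ i, √(d i) = d i / √c := fun i => by
    have hi : d i * (d i - c) = 0 := by
      have := congrFun (congrFun hdiag i) i
      simp only [diagonal_mul_diagonal, Matrix.smul_apply, diagonal_apply_eq, smul_eq_mul] at this
      linear_combination this
    rcases mul_eq_zero.mp hi with h0 | hci
    · simp [h0]
    · rw [sub_eq_zero.mp hci, Real.div_sqrt]
  rw [nuclearNorm, Finset.sum_congr rfl fun i _ => hsqrt i, ← Finset.sum_div,
    hA.trace_eq_sum_eigenvalues]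
  rfl

lemma isIdempotentElem_conjTranspose_mul_self_inv_sqrt_smul {L : Matrix (Fin a) (Fin b) ℝ} {c : ℝ}
    (hc : 0 < c) (h : (Lᴴ * L) * (Lᴴ * L) = c • (Lᴴ * L)) :
    IsIdempotentElem (((√c)⁻¹ • L)ᴴ * ((√c)⁻¹ • L)) := by
  have hM : ((√c)⁻¹ • L)ᴴ * ((√c)⁻¹ • L) = c⁻¹ • (Lᴴ * L) := by
    rw [conjTranspose_smul, star_trivial, Matrix.smul_mul, Matrix.mul_smul, smul_smul, ← mul_inv,
      Real.mul_self_sqrt hc.le]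
  rw [IsIdempotentElem, hM, Matrix.smul_mul, Matrix.mul_smul, h, smul_smul, smul_smul]
  congr 1
  field_simp

end NuclearNorm

section Centering

variable {V m k : ℕ}

def centering (V : ℕ) : Matrix (Fin V) (Fin V) ℝ := 1 - (V : ℝ)⁻¹ • of fun _ _ => 1

lemma stil_eq_centering_mul (Ssets : Fin m → Finset (Fin V)) :
    Stil Ssets = centering V * Smat Ssets := rfl

lemma centering_mul_of_const {n : Type*} (r : n → ℝ) :
    centering V * (of fun _ j => r j : Matrix (Fin V) n ℝ) = 0 := by
  ext z j
  have hV : (V : ℝ) ≠ 0 := Nat.cast_ne_zero.mpr z.pos.ne'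
  rw [centering, Matrix.sub_mul, Matrix.one_mul, Matrix.smul_mul, Matrix.sub_apply,
    Matrix.smul_apply, mul_apply]
  simp [hV]

lemma centering_mul_self : centering V * centering V = centering V := by
  conv_lhs => enter [2]; rw [centering]
  rw [Matrix.mul_sub, Matrix.mul_one, Matrix.mul_smul, centering_mul_of_const, smul_zero, sub_zero]

lemma conjTranspose_centering : (centering V)ᴴ = centering V := by
  ext z w
  simp [centering, one_apply, eq_comm]

lemma centering_mul_stil (Ssets : Fin m → Finset (Fin V)) :
    centering V * Stil Ssets = Stil Ssets := by
  rw [stil_eq_centering_mul, ← Matrix.mul_assoc, centering_mul_self]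

lemma conjTranspose_stil_mul (Ssets : Fin m → Finset (Fin V)) (X : Matrix (Fin V) (Fin m) ℝ) :
    (Stil Ssets)ᴴ * X = (Smat Ssets)ᴴ * (centering V * X) := by
  rw [stil_eq_centering_mul, conjTranspose_mul, conjTranspose_centering, Matrix.mul_assoc]

variable {Ssets : Fin m → Finset (Fin V)}

lemma stil_apply (hcard : ∀ j, (Ssets j).card = k) (z : Fin V) (j : Fin m) :
    Stil Ssets z j = Smat Ssets z j - k / V := by
  have hcol : ∑ w, Smat Ssets w j = k := by
    simp [Smat, hcard j]
  rw [stil_eq_centering_mul, centering, Matrix.sub_mul, Matrix.one_mul, Matrix.smul_mul,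
    Matrix.sub_apply, Matrix.smul_apply, mul_apply]
  simp [hcol, div_eq_inv_mul]

lemma svmFeasibleS_stil (hcard : ∀ j, (Ssets j).card = k) : svmFeasibleS Ssets (Stil Ssets) := by
  refine ⟨fun j z hz z' hz' => ?_, fun j z hz v hv => ?_⟩ <;>
    simp [stil_apply hcard, Smat, *]

end Centering

section Feasible

variable {V m k : ℕ} {Ssets : Fin m → Finset (Fin V)} {L : Matrix (Fin V) (Fin m) ℝ}

lemma svmFeasibleS.exists_eq_smat_add_sub (hne : ∀ j, (Ssets j).Nonempty)
    (hL : svmFeasibleS Ssets L) :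
    ∃ (r : Fin m → ℝ) (E : Matrix (Fin V) (Fin m) ℝ), (∀ z j, 0 ≤ E z j) ∧
      (∀ j, ∀ z ∈ Ssets j, E z j = 0) ∧ L = Smat Ssets + of (fun _ j => r j) - E := by
  choose z₀ hz₀ using hne
  refine ⟨fun j => L (z₀ j) j - 1, Smat Ssets + of (fun _ j => L (z₀ j) j - 1) - L,
    fun z j => ?_, fun j z hz => ?_, by abel⟩
  · by_cases hz : z ∈ Ssets j
    · simp [Smat, hz, hL.1 j z hz (z₀ j) (hz₀ j)]
    · have := hL.2 j (z₀ j) (hz₀ j) z hz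
      simp only [Smat, hz, Matrix.sub_apply, Matrix.add_apply, of_apply, if_false]
      linarith
  · simp [Smat, hz, hL.1 j z hz (z₀ j) (hz₀ j)]

lemma trace_conjTranspose_stil_mul_smat_add_sub (hcard : ∀ j, (Ssets j).card = k)
    (r : Fin m → ℝ) {E : Matrix (Fin V) (Fin m) ℝ} (hE : ∀ j, ∀ z ∈ Ssets j, E z j = 0) :
    trace ((Stil Ssets)ᴴ * (Smat Ssets + of (fun _ j => r j) - E)) =
      trace ((Stil Ssets)ᴴ * Stil Ssets) + k / V * ∑ j, ∑ z, E z j := by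
  have hsmat : (Stil Ssets)ᴴ * Smat Ssets = (Stil Ssets)ᴴ * Stil Ssets := by
    rw [conjTranspose_stil_mul, conjTranspose_stil_mul, centering_mul_stil, stil_eq_centering_mul]
  have hconst : (Stil Ssets)ᴴ * (of fun _ j => r j : Matrix (Fin V) (Fin m) ℝ) = 0 := by
    rw [conjTranspose_stil_mul, centering_mul_of_const, Matrix.mul_zero]
  have hE' : trace ((Stil Ssets)ᴴ * E) = -(k / V * ∑ j, ∑ z, E z j) := by
    simp only [trace, diag_apply, mul_apply, conjTranspose_apply, star_trivial, stil_apply hcard,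
      Finset.mul_sum, ← Finset.sum_neg_distrib]
    refine Finset.sum_congr rfl fun j _ => Finset.sum_congr rfl fun z _ => ?_
    by_cases hz : z ∈ Ssets j
    · simp [hE j z hz]
    · simp [Smat, hz]
  rw [Matrix.mul_sub, Matrix.mul_add, trace_sub, trace_add, hsmat, hconst, trace_zero, hE']
  ring

lemma trace_conjTranspose_stil_mul_self_le (hk : 0 < k) (hcard : ∀ j, (Ssets j).card = k)
    (hL : svmFeasibleS Ssets L) :
    trace ((Stil Ssets)ᴴ * Stil Ssets) ≤ trace ((Stil Ssets)ᴴ * L) := by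
  obtain ⟨r, E, hE0, hE, rfl⟩ :=
    hL.exists_eq_smat_add_sub fun j => Finset.card_pos.mp (hcard j ▸ hk)
  rw [trace_conjTranspose_stil_mul_smat_add_sub hcard r hE]
  exact le_add_of_nonneg_right <| mul_nonneg (by positivity) <|
    Finset.sum_nonneg fun j _ => Finset.sum_nonneg fun z _ => hE0 z j

lemma centering_mul_eq_stil_of_trace_eq (hk : 0 < k) (hcard : ∀ j, (Ssets j).card = k)
    (hL : svmFeasibleS Ssets L)
    (h : trace ((Stil Ssets)ᴴ * L) = trace ((Stil Ssets)ᴴ * Stil Ssets)) :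
    centering V * L = Stil Ssets := by
  obtain ⟨r, E, hE0, hE, rfl⟩ :=
    hL.exists_eq_smat_add_sub fun j => Finset.card_pos.mp (hcard j ▸ hk)
  rw [trace_conjTranspose_stil_mul_smat_add_sub hcard r hE, add_eq_left] at h
  suffices E = 0 by
    rw [this, sub_zero, Matrix.mul_add, centering_mul_of_const, add_zero, stil_eq_centering_mul]
  ext z j
  have hV : 0 < V := hk.trans_le (hcard j ▸ (Ssets j).card_le_univ.trans_eq (Fintype.card_fin V))
  have hsum : ∑ j, ∑ z, E z j = 0 := (mul_eq_zero.mp h).resolve_left (by positivity)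
  rw [Finset.sum_eq_zero_iff_of_nonneg fun j _ => Finset.sum_nonneg fun z _ => hE0 z j] at hsum
  exact (Finset.sum_eq_zero_iff_of_nonneg fun z _ => hE0 z j).mp (hsum j (Finset.mem_univ j)) z
    (Finset.mem_univ z)

end Feasible

lemma exists_perm_apply_eq_and_apply_eq {α : Type*} [DecidableEq α] {z₀ w₀ z w : α}
    (h₀ : z₀ ≠ w₀) (h : z ≠ w) : ∃ σ : Equiv.Perm α, σ z₀ = z ∧ σ w₀ = w := by
  have hw : Equiv.swap z₀ z w₀ ≠ z := by
    simpa using (Equiv.swap z₀ z).injective.ne h₀.symm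
  refine ⟨(Equiv.swap z₀ z).trans (Equiv.swap (Equiv.swap z₀ z w₀) w), ?_,
    by simp only [Equiv.trans_apply, Equiv.swap_apply_left]⟩
  simp only [Equiv.trans_apply, Equiv.swap_apply_left]
  exact Equiv.swap_apply_of_ne_of_ne hw.symm h

lemma eq_smul_one_add_smul_of_forall_perm {n R : Type*} [DecidableEq n] [Ring R]
    {G : Matrix n n R} (hG : ∀ (σ : Equiv.Perm n) z w, G (σ z) (σ w) = G z w) {z₀ w₀ : n}
    (h₀ : z₀ ≠ w₀) : G = (G z₀ z₀ - G z₀ w₀) • 1 + G z₀ w₀ • of fun _ _ => 1 := by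
  ext z w
  by_cases h : z = w
  · subst h
    have := hG (Equiv.swap z₀ z) z₀ z₀
    simp only [Equiv.swap_apply_left] at this
    simp [this]
  · obtain ⟨σ, rfl, rfl⟩ := exists_perm_apply_eq_and_apply_eq h₀ h
    simp [hG, h]

section Symmetric

open Finset

variable {V m k : ℕ} {Ssets : Fin m → Finset (Fin V)}

lemma smat_mul_conjTranspose_apply (z w : Fin V) :
    (Smat Ssets * (Smat Ssets)ᴴ) z w = #{j | z ∈ Ssets j ∧ w ∈ Ssets j} := by
  simp [Smat, mul_apply, ← ite_and, Finset.sum_boole, and_comm]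

lemma card_filter_eq_card_filter_powersetCard (hcard : ∀ j, (Ssets j).card = k)
    (hinj : Function.Injective Ssets)
    (hsurj : ∀ s : Finset (Fin V), s.card = k → ∃ j, Ssets j = s)
    (p : Finset (Fin V) → Prop) [DecidablePred p] :
    #{j | p (Ssets j)} = #{s ∈ univ.powersetCard k | p s} := by
  refine card_nbij Ssets (fun j hj => ?_) hinj.injOn fun s hs => ?_
  · simp_all
  · simp only [Finset.coe_filter, Finset.mem_powersetCard] at hs
    obtain ⟨j, rfl⟩ := hsurj s hs.1.2
    exact ⟨j, by simpa using hs.2, rfl⟩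

lemma smat_mul_conjTranspose_apply_perm (hcard : ∀ j, (Ssets j).card = k)
    (hinj : Function.Injective Ssets)
    (hsurj : ∀ s : Finset (Fin V), s.card = k → ∃ j, Ssets j = s)
    (σ : Equiv.Perm (Fin V)) (z w : Fin V) :
    (Smat Ssets * (Smat Ssets)ᴴ) (σ z) (σ w) = (Smat Ssets * (Smat Ssets)ᴴ) z w := by
  rw [smat_mul_conjTranspose_apply, smat_mul_conjTranspose_apply, Nat.cast_inj]
  calc #{j | σ z ∈ Ssets j ∧ σ w ∈ Ssets j}
      = #{s ∈ univ.powersetCard k | σ z ∈ s ∧ σ w ∈ s} :=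
        card_filter_eq_card_filter_powersetCard hcard hinj hsurj fun s => σ z ∈ s ∧ σ w ∈ s
    _ = #{s ∈ univ.powersetCard k | z ∈ s ∧ w ∈ s} := by
        refine card_nbij' (·.map σ.symm.toEmbedding) (·.map σ.toEmbedding) ?_ ?_ ?_ ?_ <;>
          intro s hs <;> simp_all [Finset.map_map]
    _ = #{j | z ∈ Ssets j ∧ w ∈ Ssets j} :=
        (card_filter_eq_card_filter_powersetCard hcard hinj hsurj fun s => z ∈ s ∧ w ∈ s).symm

lemma exists_mem_and_not_mem (hk : 0 < k) (hkV : k < V)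
    (hsurj : ∀ s : Finset (Fin V), s.card = k → ∃ j, Ssets j = s) {z w : Fin V} (h : z ≠ w) :
    ∃ j, z ∈ Ssets j ∧ w ∉ Ssets j := by
  obtain ⟨s, hzs, hsw, hs⟩ := Finset.exists_subsuperset_card_eq
    (s := {z}) (t := Finset.univ.erase w) (n := k) (by simpa using h) (by simp; omega)
    (by simp; omega)
  obtain ⟨j, rfl⟩ := hsurj s hs
  exact ⟨j, Finset.singleton_subset_iff.mp hzs, fun hw => by simpa using hsw hw⟩

lemma exists_smat_mul_conjTranspose_eq (hk : 0 < k) (hkV : k < V)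
    (hcard : ∀ j, (Ssets j).card = k) (hinj : Function.Injective Ssets)
    (hsurj : ∀ s : Finset (Fin V), s.card = k → ∃ j, Ssets j = s) :
    ∃ a b : ℝ, 0 < a ∧ Smat Ssets * (Smat Ssets)ᴴ = a • 1 + b • of fun _ _ => 1 := by
  have h₀ : (⟨0, by omega⟩ : Fin V) ≠ ⟨1, by omega⟩ := by simp
  refine ⟨_, _, ?_, eq_smul_one_add_smul_of_forall_perm
    (smat_mul_conjTranspose_apply_perm hcard hinj hsurj) h₀⟩
  obtain ⟨j, hz, hw⟩ := exists_mem_and_not_mem hk hkV hsurj h₀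
  rw [sub_pos, smat_mul_conjTranspose_apply, smat_mul_conjTranspose_apply, Nat.cast_lt]
  refine card_lt_card ((ssubset_iff_of_subset fun j => by simp +contextual).mpr ?_)
  exact ⟨j, by simp [hz], by simp [hw]⟩

end Symmetric

section Gram

variable {V m : ℕ} {Ssets : Fin m → Finset (Fin V)} {a b : ℝ}

lemma stil_mul_conjTranspose_stil
    (hG : Smat Ssets * (Smat Ssets)ᴴ = a • 1 + b • of fun _ _ => 1) :
    Stil Ssets * (Stil Ssets)ᴴ = a • centering V := by
  rw [stil_eq_centering_mul, conjTranspose_mul, conjTranspose_centering, Matrix.mul_assoc,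
    ← Matrix.mul_assoc (Smat Ssets), hG, Matrix.add_mul, Matrix.mul_add, Matrix.smul_mul,
    Matrix.one_mul, Matrix.mul_smul, centering_mul_self, Matrix.smul_mul, Matrix.mul_smul,
    ← Matrix.mul_assoc, centering_mul_of_const, Matrix.zero_mul, smul_zero, add_zero]

lemma conjTranspose_stil_mul_self_mul_self
    (hG : Smat Ssets * (Smat Ssets)ᴴ = a • 1 + b • of fun _ _ => 1) :
    ((Stil Ssets)ᴴ * Stil Ssets) * ((Stil Ssets)ᴴ * Stil Ssets) =
      a • ((Stil Ssets)ᴴ * Stil Ssets) := by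
  rw [Matrix.mul_assoc, ← Matrix.mul_assoc (Stil Ssets), stil_mul_conjTranspose_stil hG,
    Matrix.smul_mul, centering_mul_stil, Matrix.mul_smul]

end Gram

theorem stmt_7_general (V k : ℕ) (hk1 : 1 ≤ k) (hkV : k < V)
    (m : ℕ)
    (Ssets : Fin m → Finset (Fin V))
    (hcard : ∀ j, (Ssets j).card = k)
    (hinj : Function.Injective Ssets)
    (hsurj : ∀ s : Finset (Fin V), s.card = k → ∃ j, Ssets j = s) :
    svmFeasibleS Ssets (Stil Ssets) ∧
    (∀ L : Matrix (Fin V) (Fin m) ℝ, svmFeasibleS Ssets L →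
        nuclearNorm (Stil Ssets) ≤ nuclearNorm L) ∧
    (∀ L : Matrix (Fin V) (Fin m) ℝ, svmFeasibleS Ssets L →
        nuclearNorm L = nuclearNorm (Stil Ssets) → L = Stil Ssets) := by
  obtain ⟨a, b, ha, hG⟩ := exists_smat_mul_conjTranspose_eq hk1 hkV hcard hinj hsurj
  have hsq := conjTranspose_stil_mul_self_mul_self hG
  set M := (√a)⁻¹ • Stil Ssets
  have hM : IsIdempotentElem (Mᴴ * M) :=
    isIdempotentElem_conjTranspose_mul_self_inv_sqrt_smul ha hsq
  have htrace (L : Matrix (Fin V) (Fin m) ℝ) : trace (Mᴴ * L) = trace ((Stil Ssets)ᴴ * L) / √a := by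
    simp [M, Matrix.smul_mul, trace_smul, div_eq_inv_mul]
  have hnorm : nuclearNorm (Stil Ssets) = trace (Mᴴ * Stil Ssets) := by
    rw [htrace, nuclearNorm_eq_trace_div_sqrt hsq]
  have hle {L} (hL : svmFeasibleS Ssets L) : trace (Mᴴ * Stil Ssets) ≤ trace (Mᴴ * L) := by
    rw [htrace, htrace]
    gcongr
    exact trace_conjTranspose_stil_mul_self_le hk1 hcard hL
  refine ⟨svmFeasibleS_stil hcard, fun L hL => ?_, fun L hL hLS => ?_⟩
  · exact hnorm.trans_le ((hle hL).trans (trace_conjTranspose_mul_le_nuclearNorm hM L))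
  · have htight : trace (Mᴴ * L) = nuclearNorm L :=
      le_antisymm (trace_conjTranspose_mul_le_nuclearNorm hM L) (hLS ▸ hnorm ▸ hle hL)
    obtain ⟨X, hX⟩ := exists_eq_mul_of_trace_conjTranspose_mul_eq_nuclearNorm hM htight
    have hPL : centering V * L = L := by
      rw [hX, ← Matrix.mul_assoc, Matrix.mul_smul, centering_mul_stil]
    have htr : trace (Mᴴ * L) = trace (Mᴴ * Stil Ssets) := htight.trans (hLS.trans hnorm)
    rw [htrace, htrace, div_left_inj' (Real.sqrt_pos.mpr ha).ne'] at htr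
    rw [← hPL, centering_mul_eq_stil_of_trace_eq hk1 hcard hL htr]

/-- in the symmetric setting (all `C(V,k)` support sets of size `k`), the centered
support matrix `S̃` is the unique minimizer of the NTP-SVM program. -/
theorem stmt_7 (V k : ℕ) (hV : 2 ≤ V) (hk1 : 1 ≤ k) (hkV : k < V)
    (m : ℕ) (hm : m = Nat.choose V k)
    (Ssets : Fin m → Finset (Fin V))
    (hcard : ∀ j, (Ssets j).card = k)
    (hinj : Function.Injective Ssets)
    (hsurj : ∀ s : Finset (Fin V), s.card = k → ∃ j, Ssets j = s) :
    svmFeasibleS Ssets (Stil Ssets) ∧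
    (∀ L : Matrix (Fin V) (Fin m) ℝ, svmFeasibleS Ssets L →
        nuclearNorm (Stil Ssets) ≤ nuclearNorm L) ∧
    (∀ L : Matrix (Fin V) (Fin m) ℝ, svmFeasibleS Ssets L →
        nuclearNorm L = nuclearNorm (Stil Ssets) → L = Stil Ssets) :=
  stmt_7_general V k hk1 hkV m Ssets hcard hinj hsurj
end
end

section
/- In the symmetric setting, assume d ≥ V−1, let S̃ = UΣVᵀ be a singular value decomposition of S̃ (U ∈ ℝ^{V×(V−1)}, V ∈ ℝ^{m×(V−1)} with orthonormal columns, Σ ∈ ℝ^{(V−1)×(V−1)} diagonal positive), and define W := UΣ^{1/2}R and H := RᵀΣ^{1/2}Vᵀ for any R ∈ ℝ^{(V−1)×d} with RRᵀ = I_{V−1}. Then for every context j ∈ {1,…,m}, the context embedding (the j-th column of H) satisfies h_j = C(V−2,k−1)^{−1/2} · ∑_{z∈S_j} w_z, where w_z denotes the z-th row of W; in particular, each context embedding is colinear with the sum of the word embeddings of its in-support tokens. -/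
/-!
Every token lies in `C(V-1,k-1)` contexts and every pair of distinct tokens in
`C(V-1,k-1) - C(V-2,k-1)` of them, so `S Sᵀ = C(V-2,k-1) I + b 𝟙𝟙ᵀ`. The all-ones vector kills
`S̃`, hence the columns of `U`, so `Uᵀ S = Uᵀ S̃ = Σ Vᵀ` and
`Σ² = Uᵀ S Sᵀ U = C(V-2,k-1) I`: all singular values equal `√C(V-2,k-1)`. Then
`Wᵀ S = Rᵀ Σ^{1/2} Uᵀ S = √C(V-2,k-1) H`, and the `(t, j)` entry of `Wᵀ S` is `∑_{z ∈ S_j} W z t`.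
-/

open Filter Topology Matrix

noncomputable section

open Finset

def allOnes (n : Type*) : Matrix n n ℝ :=
  of fun _ _ => 1

theorem transpose_allOnes (n : Type*) : (allOnes n)ᵀ = allOnes n :=
  rfl

theorem allOnes_mul_allOnes (n : Type*) [Fintype n] :
    allOnes n * allOnes n = (Fintype.card n : ℝ) • allOnes n := by
  ext
  simp [allOnes, mul_apply]

section Counting

variable {α : Type*} [Fintype α] [DecidableEq α] {k : ℕ}

theorem card_powersetCard_filter_mem (hk : 1 ≤ k) (z : α) :
    #{s ∈ univ.powersetCard k | z ∈ s} = (Fintype.card α - 1).choose (k - 1) := by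
  simpa using card_filter_powersetCard_subset {z} univ k (subset_univ _) (by simpa using hk)

theorem card_powersetCard_filter_mem_notMem (hk : 1 ≤ k) {z z' : α} (h : z ≠ z') :
    #{s ∈ univ.powersetCard k | z ∈ s ∧ z' ∉ s} = (Fintype.card α - 2).choose (k - 1) := by
  have hfilter : {s ∈ (univ : Finset α).powersetCard k | z ∈ s ∧ z' ∉ s} =
      {s ∈ (univ.erase z').powersetCard k | {z} ⊆ s} := by
    ext s
    simp only [mem_filter, mem_powersetCard, subset_erase, singleton_subset_iff]
    tauto
  rw [hfilter, card_filter_powersetCard_subset {z} _ _ (by simpa using h) (by simpa using hk)]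
  simp [card_erase_of_mem, Nat.sub_sub]

end Counting

section SupportMatrix

variable {V m k : ℕ} {Ssets : Fin m → Finset (Fin V)}

theorem card_filter_eq_card_powersetCard_filter (hcard : ∀ j, #(Ssets j) = k)
    (hinj : Function.Injective Ssets)
    (hsurj : ∀ s : Finset (Fin V), #s = k → ∃ j, Ssets j = s)
    (p : Finset (Fin V) → Prop) [DecidablePred p] :
    #{j | p (Ssets j)} = #{s ∈ univ.powersetCard k | p s} := by
  refine card_nbij Ssets ?_ hinj.injOn ?_
  · intro j hj
    simp_all [mem_powersetCard]
  · intro s hs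
    simp only [coe_filter, mem_powersetCard, Set.mem_ofPred_eq] at hs
    obtain ⟨j, rfl⟩ := hsurj s hs.1.2
    exact ⟨j, by simpa using hs.2, rfl⟩

theorem Smat_mul_transpose_Smat_apply (z z' : Fin V) :
    (Smat Ssets * (Smat Ssets)ᵀ) z z' = #{j | z ∈ Ssets j ∧ z' ∈ Ssets j} := by
  simp [Smat, mul_apply, ← ite_and, and_comm]

theorem transpose_mul_Smat_apply {l : Type*} (A : Matrix (Fin V) l ℝ) (t : l) (j : Fin m) :
    (Aᵀ * Smat Ssets) t j = ∑ z ∈ Ssets j, A z t := by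
  simp [Smat, mul_apply]

theorem Smat_mul_transpose_Smat (hk : 1 ≤ k) (hcard : ∀ j, #(Ssets j) = k)
    (hinj : Function.Injective Ssets)
    (hsurj : ∀ s : Finset (Fin V), #s = k → ∃ j, Ssets j = s) :
    Smat Ssets * (Smat Ssets)ᵀ = ((V - 2).choose (k - 1) : ℝ) • 1 +
      (((V - 1).choose (k - 1) : ℝ) - (V - 2).choose (k - 1)) • allOnes (Fin V) := by
  ext z z'
  have hcount := card_filter_eq_card_powersetCard_filter hcard hinj hsurj
  rw [Smat_mul_transpose_Smat_apply, hcount fun s => z ∈ s ∧ z' ∈ s]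
  obtain rfl | h := eq_or_ne z z'
  · simp [allOnes, card_powersetCard_filter_mem hk]
  · have hsplit := card_filter_add_card_filter_not (s := {s ∈ univ.powersetCard k | z ∈ s})
      (z' ∈ ·)
    simp only [filter_filter, card_powersetCard_filter_mem hk,
      card_powersetCard_filter_mem_notMem hk h, Fintype.card_fin] at hsplit
    simp [allOnes, h, ← hsplit]

end SupportMatrix

section SVD

variable {K : Type*} [Field K] {n m r : Type*} [Fintype n] [Fintype r]
  [DecidableEq r] {A : Matrix n m K} {U : Matrix n r K} {σ : r → K} {W : Matrix m r K}

theorem mul_eq_zero_of_mul_svd_eq_zero [Fintype m] {l : Type*} {B : Matrix l n K}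
    (hA : A = U * diagonal σ * Wᵀ) (hW : Wᵀ * W = 1) (hσ : ∀ i, σ i ≠ 0) (hBA : B * A = 0) :
    B * U = 0 := by
  have hBUσ : B * U * diagonal σ = 0 := by
    calc B * U * diagonal σ = B * A * W := by rw [hA]; simp only [Matrix.mul_assoc, hW, mul_one]
      _ = 0 := by rw [hBA, Matrix.zero_mul]
  calc B * U = B * U * diagonal σ * diagonal σ⁻¹ := by
        rw [Matrix.mul_assoc, diagonal_mul_diagonal]
        simp [hσ]
    _ = 0 := by rw [hBUσ, Matrix.zero_mul]

theorem transpose_mul_svd (hA : A = U * diagonal σ * Wᵀ) (hU : Uᵀ * U = 1) :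
    Uᵀ * A = diagonal σ * Wᵀ := by
  rw [hA, ← Matrix.mul_assoc, ← Matrix.mul_assoc, hU, one_mul]

end SVD

theorem mul_self_eq_of_mul_transpose_eq {n m r : Type*} [Fintype n] [Fintype m] [Fintype r]
    [DecidableEq n] [DecidableEq r] {S : Matrix n m ℝ} {U : Matrix n r ℝ} {σ : r → ℝ}
    {W : Matrix m r ℝ} {a b : ℝ} (hUS : Uᵀ * S = diagonal σ * Wᵀ) (hU : Uᵀ * U = 1)
    (hW : Wᵀ * W = 1) (hJU : allOnes n * U = 0) (hS : S * Sᵀ = a • 1 + b • allOnes n) (i : r) :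
    σ i * σ i = a := by
  have hσσ : diagonal σ * diagonal σ = a • 1 :=
    calc diagonal σ * diagonal σ = (Uᵀ * S) * (Uᵀ * S)ᵀ := by
          rw [hUS, transpose_mul, diagonal_transpose, transpose_transpose, Matrix.mul_assoc,
            ← Matrix.mul_assoc Wᵀ, hW, Matrix.one_mul]
      _ = Uᵀ * (S * Sᵀ) * U := by
          simp only [transpose_mul, transpose_transpose, Matrix.mul_assoc]
      _ = a • 1 := by
          rw [hS, Matrix.mul_add, Matrix.add_mul, Matrix.mul_smul, Matrix.smul_mul,
            Matrix.mul_smul, Matrix.smul_mul, Matrix.mul_one, hU, Matrix.mul_assoc, hJU,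
            Matrix.mul_zero, smul_zero, add_zero]
  simpa [diagonal_mul_diagonal] using congrFun₂ hσσ i i

section Centering

variable {V m : ℕ} (Ssets : Fin m → Finset (Fin V))

theorem allOnes_mul_Stil (hV : V ≠ 0) : allOnes (Fin V) * Stil Ssets = 0 := by
  change allOnes (Fin V) * ((1 - (V : ℝ)⁻¹ • allOnes (Fin V)) * Smat Ssets) = 0
  rw [← Matrix.mul_assoc, Matrix.mul_sub, Matrix.mul_one, Matrix.mul_smul, allOnes_mul_allOnes,
    Fintype.card_fin, smul_smul, inv_mul_cancel₀ (by exact_mod_cast hV), one_smul, sub_self,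
    Matrix.zero_mul]

theorem transpose_mul_Stil {r : Type*} {U : Matrix (Fin V) r ℝ} (hU : allOnes (Fin V) * U = 0) :
    Uᵀ * Stil Ssets = Uᵀ * Smat Ssets := by
  have hUJ : Uᵀ * allOnes (Fin V) = 0 := by
    rw [← transpose_allOnes, ← transpose_mul, hU, transpose_zero]
  change Uᵀ * ((1 - (V : ℝ)⁻¹ • allOnes (Fin V)) * Smat Ssets) = Uᵀ * Smat Ssets
  rw [← Matrix.mul_assoc, Matrix.mul_sub, Matrix.mul_one, Matrix.mul_smul, hUJ, smul_zero,
    sub_zero]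

end Centering

theorem stmt_9_general (V k d : ℕ) (hk1 : 1 ≤ k) (hkV : k < V)
    (m : ℕ)
    (Ssets : Fin m → Finset (Fin V))
    (hcard : ∀ j, (Ssets j).card = k)
    (hinj : Function.Injective Ssets)
    (hsurj : ∀ s : Finset (Fin V), s.card = k → ∃ j, Ssets j = s)
    (U : Matrix (Fin V) (Fin (V - 1)) ℝ) (Vm : Matrix (Fin m) (Fin (V - 1)) ℝ)
    (σ : Fin (V - 1) → ℝ)
    (hU : Uᵀ * U = 1) (hVm : Vmᵀ * Vm = 1) (hσ : ∀ i, 0 < σ i)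
    (hSVD : Stil Ssets = U * Matrix.diagonal σ * Vmᵀ)
    (R : Matrix (Fin (V - 1)) (Fin d) ℝ)
    (W : Matrix (Fin V) (Fin d) ℝ)
    (hW : W = U * Matrix.diagonal (fun i => Real.sqrt (σ i)) * R)
    (H : Matrix (Fin d) (Fin m) ℝ)
    (hH : H = Rᵀ * Matrix.diagonal (fun i => Real.sqrt (σ i)) * Vmᵀ) :
    ∀ (j : Fin m) (t : Fin d),
      H t j = (Real.sqrt (Nat.choose (V - 2) (k - 1)))⁻¹ * ∑ z ∈ Ssets j, W z t := by
  set c : ℝ := (Nat.choose (V - 2) (k - 1) : ℝ)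
  have hc : 0 < √c := Real.sqrt_pos.2 (Nat.cast_pos.2 (Nat.choose_pos (by omega)))
  have hJU : allOnes (Fin V) * U = 0 := mul_eq_zero_of_mul_svd_eq_zero hSVD hVm
    (fun i => (hσ i).ne') (allOnes_mul_Stil Ssets (by omega))
  have hUS : Uᵀ * Smat Ssets = diagonal σ * Vmᵀ := by
    rw [← transpose_mul_Stil Ssets hJU, transpose_mul_svd hSVD hU]
  obtain rfl : σ = fun _ => √c := funext fun i => by
    rw [← Real.sqrt_mul_self (hσ i).le]
    exact congrArg _ (mul_self_eq_of_mul_transpose_eq hUS hU hVm hJU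
      (Smat_mul_transpose_Smat hk1 hcard hinj hsurj) i)
  have hWS : Wᵀ * Smat Ssets = √c • H := by
    rw [hW, hH, transpose_mul, transpose_mul, diagonal_transpose, Matrix.mul_assoc,
      Matrix.mul_assoc, hUS, ← smul_one_eq_diagonal (√c), Matrix.smul_mul, Matrix.one_mul,
      Matrix.mul_smul, Matrix.mul_smul, Matrix.mul_assoc]
  intro j t
  rw [← transpose_mul_Smat_apply, hWS, Matrix.smul_apply, smul_eq_mul,
    inv_mul_cancel_left₀ hc.ne']

/-- in the symmetric setting with `d ≥ V − 1`, each context embedding (column of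
`H = RᵀΣ^{1/2}Vᵀ`) equals `C(V−2,k−1)^{−1/2}` times the sum of the word embeddings (rows of
`W = UΣ^{1/2}R`) of its in-support tokens. -/
theorem stmt_9 (V k d : ℕ) (hV : 2 ≤ V) (hk1 : 1 ≤ k) (hkV : k < V)
    (m : ℕ) (hm : m = Nat.choose V k)
    (Ssets : Fin m → Finset (Fin V))
    (hcard : ∀ j, (Ssets j).card = k)
    (hinj : Function.Injective Ssets)
    (hsurj : ∀ s : Finset (Fin V), s.card = k → ∃ j, Ssets j = s)
    (hd : V - 1 ≤ d)
    (U : Matrix (Fin V) (Fin (V - 1)) ℝ) (Vm : Matrix (Fin m) (Fin (V - 1)) ℝ)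
    (σ : Fin (V - 1) → ℝ)
    (hU : Uᵀ * U = 1) (hVm : Vmᵀ * Vm = 1) (hσ : ∀ i, 0 < σ i)
    (hSVD : Stil Ssets = U * Matrix.diagonal σ * Vmᵀ)
    (R : Matrix (Fin (V - 1)) (Fin d) ℝ) (hR : R * Rᵀ = 1)
    (W : Matrix (Fin V) (Fin d) ℝ)
    (hW : W = U * Matrix.diagonal (fun i => Real.sqrt (σ i)) * R)
    (H : Matrix (Fin d) (Fin m) ℝ)
    (hH : H = Rᵀ * Matrix.diagonal (fun i => Real.sqrt (σ i)) * Vmᵀ) :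
    ∀ (j : Fin m) (t : Fin d),
      H t j = (Real.sqrt (Nat.choose (V - 2) (k - 1)))⁻¹ * ∑ z ∈ Ssets j, W z t :=
  stmt_9_general V k d hk1 hkV m Ssets hcard hinj hsurj U Vm σ hU hVm hσ hSVD R W hW H hH
end
end

section
/- Let S̃ = UΣVᵀ be a singular value decomposition of S̃ := (I_V − (1/V)1_V 1_Vᵀ) S, where U and V have orthonormal columns and Σ is diagonal with positive entries, and set A := UVᵀ. If A[v,j] < 0 for every j ∈ {1,…,m} and every v ∉ S_j, then S̃ is a minimizer of the NTP-SVM program. -/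
/-!
`A = UVᵀ` is a dual certificate. Being a contraction, it satisfies `tr(AᵀL) ≤ ‖L‖_*` for every
`L` (the nuclear norm is dual to the operator norm), while `tr(AᵀS̃) = Σ σᵢ ≥ ‖S̃‖_*`. Since the
columns of `S̃` sum to zero and `Σ` is invertible, so do the columns of `A`. Hence, for feasible
`L`, each column of `L - S̃` may be shifted by its constant value on `S_j` without changing
`tr(Aᵀ(L - S̃))`; the shifted column vanishes on `S_j` and is `≤ 0` off `S_j`, where `A < 0`.
So `‖S̃‖_* ≤ tr(AᵀS̃) ≤ tr(AᵀL) ≤ ‖L‖_*`.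
-/

open Filter Topology Matrix

noncomputable section

section Contraction

variable {l m n r : Type*} [Fintype l] [Fintype m] [Fintype n] [Fintype r]

def IsContraction (G : Matrix m n ℝ) : Prop :=
  ∀ x : n → ℝ, (G *ᵥ x) ⬝ᵥ (G *ᵥ x) ≤ x ⬝ᵥ x

lemma dotProduct_le_sqrt_mul_sqrt (x y : n → ℝ) :
    x ⬝ᵥ y ≤ √(x ⬝ᵥ x) * √(y ⬝ᵥ y) := by
  simpa [dotProduct, pow_two] using Real.sum_mul_le_sqrt_mul_sqrt Finset.univ x y

lemma mulVec_dotProduct_mulVec (B : Matrix l m ℝ) (C : Matrix l n ℝ) (x : m → ℝ) (y : n → ℝ) :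
    (B *ᵥ x) ⬝ᵥ (C *ᵥ y) = x ⬝ᵥ ((Bᵀ * C) *ᵥ y) := by
  rw [dotProduct_comm, dotProduct_mulVec, ← mulVec_transpose, dotProduct_comm, mulVec_mulVec]

omit [Fintype m] [Fintype n] in
lemma col_dotProduct_col (B : Matrix l m ℝ) (C : Matrix l n ℝ) (i : m) (j : n) :
    B.col i ⬝ᵥ C.col j = (Bᵀ * C) i j :=
  rfl

lemma trace_transpose_mul_eq_sum_col_dotProduct (B C : Matrix m n ℝ) :
    trace (Bᵀ * C) = ∑ j, B.col j ⬝ᵥ C.col j :=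
  rfl

lemma isContraction_of_transpose_mul_self_eq_diagonal [DecidableEq n] {B : Matrix m n ℝ}
    {d : n → ℝ} (hB : Bᵀ * B = diagonal d) (hd : ∀ i, d i ≤ 1) : IsContraction B := by
  intro x
  rw [mulVec_dotProduct_mulVec, hB]
  simp only [dotProduct, mulVec_diagonal]
  refine Finset.sum_le_sum fun i _ => ?_
  nlinarith [mul_self_nonneg (x i), hd i]

lemma isContraction_of_transpose_mul_self_eq_one [DecidableEq n] {B : Matrix m n ℝ}
    (hB : Bᵀ * B = 1) : IsContraction B :=
  isContraction_of_transpose_mul_self_eq_diagonal (d := 1) (by rw [hB, Pi.one_def, diagonal_one])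
    fun _ => le_rfl

lemma IsContraction.mul {B : Matrix l m ℝ} {C : Matrix m n ℝ} (hB : IsContraction B)
    (hC : IsContraction C) : IsContraction (B * C) := fun x => by
  rw [← mulVec_mulVec]
  exact (hB _).trans (hC _)

lemma isContraction_transpose_of_transpose_mul_self_eq_one [DecidableEq m] [DecidableEq n]
    {C : Matrix m n ℝ} (hC : Cᵀ * C = 1) : IsContraction Cᵀ := by
  intro x
  set P := C * Cᵀ
  -- `P` is an orthogonal projection, so `‖x‖² - ‖Cᵀx‖² = ‖(1 - P)x‖² ≥ 0`.
  have hP : (1 - P)ᵀ * (1 - P) = 1 - P := by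
    have hPP : P * P = P := by
      simp only [P, Matrix.mul_assoc, ← Matrix.mul_assoc Cᵀ C, hC, Matrix.one_mul]
    have hPt : Pᵀ = P := by simp [P, transpose_mul]
    rw [transpose_sub, transpose_one, hPt, sub_mul, mul_sub, mul_sub, Matrix.one_mul,
      Matrix.mul_one, Matrix.one_mul, hPP]
    abel
  have hproj := dotProduct_self_star_nonneg ((1 - P) *ᵥ x)
  rw [star_trivial, mulVec_dotProduct_mulVec, hP, sub_mulVec, one_mulVec, dotProduct_sub] at hproj
  rw [mulVec_dotProduct_mulVec, transpose_transpose]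
  linarith

lemma IsContraction.mulVec_dotProduct_le {G : Matrix m n ℝ} (hG : IsContraction G)
    (x : n → ℝ) (y : m → ℝ) : (G *ᵥ x) ⬝ᵥ y ≤ √(x ⬝ᵥ x) * √(y ⬝ᵥ y) :=
  (dotProduct_le_sqrt_mul_sqrt _ _).trans <|
    mul_le_mul_of_nonneg_right (Real.sqrt_le_sqrt (hG x)) (Real.sqrt_nonneg _)

lemma trace_transpose_mul_svd_le [DecidableEq r] {G : Matrix m n ℝ} (hG : IsContraction G)
    {U : Matrix m r ℝ} {W : Matrix n r ℝ} (hU : Uᵀ * U = 1) (hW : Wᵀ * W = 1) {σ : r → ℝ}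
    (hσ : ∀ i, 0 ≤ σ i) : trace (Gᵀ * (U * diagonal σ * Wᵀ)) ≤ ∑ i, σ i := by
  have hcol : ∀ i, ((G * W)ᵀ * U) i i ≤ 1 := fun i =>
    calc ((G * W)ᵀ * U) i i = (G *ᵥ W.col i) ⬝ᵥ U.col i := rfl
      _ ≤ √(W.col i ⬝ᵥ W.col i) * √(U.col i ⬝ᵥ U.col i) := hG.mulVec_dotProduct_le _ _
      _ = 1 := by simp [col_dotProduct_col, hU, hW]
  calc trace (Gᵀ * (U * diagonal σ * Wᵀ)) = trace (Gᵀ * U * diagonal σ * Wᵀ) := by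
        simp only [Matrix.mul_assoc]
    _ = trace (Wᵀ * (Gᵀ * U * diagonal σ)) := trace_mul_comm _ _
    _ = trace ((G * W)ᵀ * U * diagonal σ) := by
        rw [transpose_mul]; simp only [Matrix.mul_assoc]
    _ = ∑ i, ((G * W)ᵀ * U) i i * σ i := by simp [trace, mul_diagonal]
    _ ≤ ∑ i, σ i := Finset.sum_le_sum fun i _ => by nlinarith [hcol i, hσ i]

lemma trace_transpose_mul_mul_svd [DecidableEq r] {U : Matrix m r ℝ} {W : Matrix n r ℝ}
    (hU : Uᵀ * U = 1) (hW : Wᵀ * W = 1) (σ : r → ℝ) :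
    trace ((U * Wᵀ)ᵀ * (U * diagonal σ * Wᵀ)) = ∑ i, σ i := by
  rw [transpose_mul, transpose_transpose, Matrix.mul_assoc, ← Matrix.mul_assoc Uᵀ,
    ← Matrix.mul_assoc Uᵀ, hU, Matrix.one_mul, trace_mul_comm, Matrix.mul_assoc, hW,
    Matrix.mul_one, trace_diagonal]

lemma vecMul_mul_transpose_eq_zero [DecidableEq r] {U : Matrix m r ℝ} {W : Matrix n r ℝ}
    (hW : Wᵀ * W = 1) {σ : r → ℝ} (hσ : ∀ i, σ i ≠ 0) {x : m → ℝ}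
    (hx : x ᵥ* (U * diagonal σ * Wᵀ) = 0) : x ᵥ* (U * Wᵀ) = 0 := by
  have hxU : x ᵥ* U = 0 := by
    have h := congrArg (· ᵥ* W) hx
    rw [vecMul_vecMul, Matrix.mul_assoc, hW, Matrix.mul_one, zero_vecMul, ← vecMul_vecMul] at h
    funext i
    have hi := congrFun h i
    rw [vecMul_diagonal, Pi.zero_apply] at hi
    exact (mul_eq_zero.mp hi).resolve_right (hσ i)
  rw [← vecMul_vecMul, hxU, zero_vecMul]

end Contraction

section NuclearNorm

variable {a b : ℕ}

lemma exists_orthogonal_transpose_mul_self_eq_diagonal (M : Matrix (Fin a) (Fin b) ℝ) :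
    ∃ Q : Matrix (Fin b) (Fin b) ℝ, Qᵀ * Q = 1 ∧ Q * Qᵀ = 1 ∧
      (M * Q)ᵀ * (M * Q) = diagonal (isHermitian_conjTranspose_mul_self M).eigenvalues := by
  set h := isHermitian_conjTranspose_mul_self M
  set Q : Matrix (Fin b) (Fin b) ℝ := ↑h.eigenvectorUnitary
  have hstar : star Q = Qᵀ := by
    rw [star_eq_conjTranspose, conjTranspose_eq_transpose_of_trivial]
  refine ⟨Q, ?_, ?_, ?_⟩
  · rw [← hstar]; exact Unitary.coe_star_mul_self _
  · rw [← hstar]; exact Unitary.coe_mul_star_self _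
  · have hdiag := h.conjStarAlgAut_star_eigenvectorUnitary
    rw [Unitary.conjStarAlgAut_apply, Unitary.coe_star, star_star, hstar] at hdiag
    have hMQ : (M * Q)ᵀ * (M * Q) = Qᵀ * (Mᴴ * M) * Q := by
      rw [conjTranspose_eq_transpose_of_trivial, transpose_mul]
      simp only [Matrix.mul_assoc]
    rw [hMQ, hdiag]
    rfl

lemma trace_transpose_mul_le_nuclearNorm {G : Matrix (Fin a) (Fin b) ℝ} (hG : IsContraction G)
    (M : Matrix (Fin a) (Fin b) ℝ) : trace (Gᵀ * M) ≤ nuclearNorm M := by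
  obtain ⟨Q, hQ, hQ', hMQ⟩ := exists_orthogonal_transpose_mul_self_eq_diagonal M
  have hcol : ∀ i, (G * Q).col i ⬝ᵥ (M * Q).col i ≤
      √((isHermitian_conjTranspose_mul_self M).eigenvalues i) := fun i =>
    calc (G * Q).col i ⬝ᵥ (M * Q).col i = (G *ᵥ Q.col i) ⬝ᵥ (M * Q).col i := rfl
      _ ≤ √(Q.col i ⬝ᵥ Q.col i) * √((M * Q).col i ⬝ᵥ (M * Q).col i) :=
        hG.mulVec_dotProduct_le _ _
      _ = _ := by rw [col_dotProduct_col, col_dotProduct_col, hQ, hMQ]; simp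
  calc trace (Gᵀ * M) = trace ((G * Q)ᵀ * (M * Q)) := by
        rw [transpose_mul, Matrix.mul_assoc, trace_mul_comm Qᵀ, Matrix.mul_assoc,
          Matrix.mul_assoc, hQ', Matrix.mul_one]
    _ ≤ nuclearNorm M := by
        rw [trace_transpose_mul_eq_sum_col_dotProduct]
        exact Finset.sum_le_sum fun i _ => hcol i

/-- The nuclear norm is attained by the contraction `M Q D Qᵀ`, where `Q` diagonalizes `MᵀM` and
`D = diag(μᵢ^(-1/2))` (with the convention `0⁻¹ = 0` on the kernel). -/
lemma exists_isContraction_trace_eq_nuclearNorm (M : Matrix (Fin a) (Fin b) ℝ) :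
    ∃ G : Matrix (Fin a) (Fin b) ℝ, IsContraction G ∧ trace (Gᵀ * M) = nuclearNorm M := by
  obtain ⟨Q, -, hQ', hMQ⟩ := exists_orthogonal_transpose_mul_self_eq_diagonal M
  set μ := (isHermitian_conjTranspose_mul_self M).eigenvalues
  set D := diagonal fun i => (√(μ i))⁻¹
  have hD : Dᵀ = D := diagonal_transpose _
  have hμ : ∀ i, (√(μ i))⁻¹ * μ i = √(μ i) := fun i => by
    rw [← div_eq_inv_mul, Real.div_sqrt]
  refine ⟨M * Q * D * Qᵀ, ?_, ?_⟩
  · refine IsContraction.mul (isContraction_of_transpose_mul_self_eq_diagonal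
      (d := fun i => √(μ i) * (√(μ i))⁻¹) ?_ fun i => mul_inv_le_one)
      (isContraction_of_transpose_mul_self_eq_one (by rwa [transpose_transpose]))
    rw [transpose_mul, hD, Matrix.mul_assoc, ← Matrix.mul_assoc _ (M * Q), hMQ,
      diagonal_mul_diagonal, diagonal_mul_diagonal]
    simp only [← mul_assoc, hμ]
  · calc trace ((M * Q * D * Qᵀ)ᵀ * M) = trace (D * ((M * Q)ᵀ * (M * Q))) := by
          rw [transpose_mul, transpose_transpose, Matrix.mul_assoc, trace_mul_comm,
            transpose_mul, hD]
          simp only [Matrix.mul_assoc]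
      _ = nuclearNorm M := by
          rw [hMQ, diagonal_mul_diagonal, trace_diagonal]
          simp only [hμ]
          rfl

lemma nuclearNorm_le_sum_of_eq_svd {r : Type*} [Fintype r] [DecidableEq r]
    {M : Matrix (Fin a) (Fin b) ℝ} {U : Matrix (Fin a) r ℝ} {W : Matrix (Fin b) r ℝ} {σ : r → ℝ}
    (hU : Uᵀ * U = 1) (hW : Wᵀ * W = 1) (hσ : ∀ i, 0 ≤ σ i)
    (hM : M = U * diagonal σ * Wᵀ) : nuclearNorm M ≤ ∑ i, σ i := by
  obtain ⟨G, hG, hGM⟩ := exists_isContraction_trace_eq_nuclearNorm M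
  rw [← hGM, hM]
  exact trace_transpose_mul_svd_le hG hU hW hσ

end NuclearNorm

lemma dotProduct_le_dotProduct_of_certificate {ι : Type*} [Fintype ι] {s : Finset ι} {z₀ : ι}
    {a x y : ι → ℝ} (ha : ∑ i, a i = 0) (ha_neg : ∀ v ∉ s, a v ≤ 0)
    (hx : ∀ z ∈ s, x z = x z₀) (hy : ∀ z ∈ s, y z = y z₀)
    (hxy : ∀ v ∉ s, x z₀ - x v ≤ y z₀ - y v) : a ⬝ᵥ x ≤ a ⬝ᵥ y := by
  -- Since `∑ a = 0`, shifting `y - x` by its constant value on `s` does not change `a ⬝ᵥ (y - x)`.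
  set c := y z₀ - x z₀
  have hterm : ∀ v, 0 ≤ a v * (y v - x v - c) := fun v => by
    by_cases hv : v ∈ s
    · simp [c, hx v hv, hy v hv]
    · exact mul_nonneg_of_nonpos_of_nonpos (ha_neg v hv) (by linarith [hxy v hv])
  have hshift : ∑ v, a v * (y v - x v - c) = a ⬝ᵥ y - a ⬝ᵥ x := by
    simp only [dotProduct, mul_sub, Finset.sum_sub_distrib, ← Finset.sum_mul, ha, zero_mul,
      sub_zero]
  linarith [Finset.sum_nonneg fun v (_ : v ∈ Finset.univ) => hterm v]

section Support

variable {V m : ℕ} (Ssets : Fin m → Finset (Fin V))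

lemma Stil_apply (z : Fin V) (j : Fin m) :
    Stil Ssets z j = (if z ∈ Ssets j then 1 else 0) - (V : ℝ)⁻¹ * (Ssets j).card := by
  simp [Stil, Smat, mul_apply, one_apply, Finset.sum_ite_mem, mul_comm]

lemma Stil_eq_of_mem {j : Fin m} {z z' : Fin V} (hz : z ∈ Ssets j) (hz' : z' ∈ Ssets j) :
    Stil Ssets z j = Stil Ssets z' j := by
  simp [Stil_apply, hz, hz']

lemma Stil_sub_Stil_of_mem_of_notMem {j : Fin m} {z v : Fin V} (hz : z ∈ Ssets j)
    (hv : v ∉ Ssets j) : Stil Ssets z j - Stil Ssets v j = 1 := by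
  simp [Stil_apply, hz, hv]

lemma svmFeasibleS_Stil : svmFeasibleS Ssets (Stil Ssets) :=
  ⟨fun _ _ hz _ hz' => Stil_eq_of_mem Ssets hz hz',
    fun _ _ hz _ hv => (Stil_sub_Stil_of_mem_of_notMem Ssets hz hv).ge⟩

lemma one_vecMul_Stil (hV : V ≠ 0) : (fun _ => 1) ᵥ* Stil Ssets = 0 := by
  funext j
  simp only [vecMul, dotProduct, one_mul, Stil_apply, Finset.sum_sub_distrib, Finset.sum_boole,
    Finset.sum_const, Finset.card_univ, Fintype.card_fin, nsmul_eq_mul, Pi.zero_apply]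
  field_simp
  simp

lemma trace_transpose_mul_Stil_le {A L : Matrix (Fin V) (Fin m) ℝ} (hne : ∀ j, (Ssets j).Nonempty)
    (hA : (fun _ => 1) ᵥ* A = 0) (hA_neg : ∀ j, ∀ v ∉ Ssets j, A v j ≤ 0)
    (hL : svmFeasibleS Ssets L) : trace (Aᵀ * Stil Ssets) ≤ trace (Aᵀ * L) := by
  simp only [trace_transpose_mul_eq_sum_col_dotProduct]
  refine Finset.sum_le_sum fun j _ => ?_
  obtain ⟨z₀, hz₀⟩ := hne j
  refine dotProduct_le_dotProduct_of_certificate ?_ (hA_neg j)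
    (fun z hz => Stil_eq_of_mem Ssets hz hz₀) (fun z hz => hL.1 j z hz z₀ hz₀)
    (fun v hv => (Stil_sub_Stil_of_mem_of_notMem Ssets hz₀ hv).trans_le (hL.2 j z₀ hz₀ v hv))
  simpa [vecMul, dotProduct] using congrFun hA j

end Support

theorem stmt_10_general (V m : ℕ) (hV : 2 ≤ V)
    (Ssets : Fin m → Finset (Fin V)) (hne : ∀ j, (Ssets j).Nonempty)
    (r : ℕ)
    (U : Matrix (Fin V) (Fin r) ℝ) (Vm : Matrix (Fin m) (Fin r) ℝ) (σ : Fin r → ℝ)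
    (hU : Uᵀ * U = 1) (hVm : Vmᵀ * Vm = 1) (hσ : ∀ i, 0 < σ i)
    (hSVD : Stil Ssets = U * Matrix.diagonal σ * Vmᵀ)
    (hcert : ∀ (j : Fin m) (v : Fin V), v ∉ Ssets j → (U * Vmᵀ) v j < 0) :
    svmFeasibleS Ssets (Stil Ssets) ∧
    ∀ L : Matrix (Fin V) (Fin m) ℝ, svmFeasibleS Ssets L →
      nuclearNorm (Stil Ssets) ≤ nuclearNorm L := by
  refine ⟨svmFeasibleS_Stil Ssets, fun L hL => ?_⟩
  have hA_contr : IsContraction (U * Vmᵀ) :=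
    (isContraction_of_transpose_mul_self_eq_one hU).mul
      (isContraction_transpose_of_transpose_mul_self_eq_one hVm)
  have hA_col : (fun _ => 1) ᵥ* (U * Vmᵀ) = 0 :=
    vecMul_mul_transpose_eq_zero hVm (fun i => (hσ i).ne') <| by
      rw [← hSVD]; exact one_vecMul_Stil Ssets (by omega)
  calc nuclearNorm (Stil Ssets) ≤ ∑ i, σ i :=
        nuclearNorm_le_sum_of_eq_svd hU hVm (fun i => (hσ i).le) hSVD
    _ = trace ((U * Vmᵀ)ᵀ * Stil Ssets) := by rw [hSVD, trace_transpose_mul_mul_svd hU hVm]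
    _ ≤ trace ((U * Vmᵀ)ᵀ * L) :=
        trace_transpose_mul_Stil_le Ssets hne hA_col (fun j v hv => (hcert j v hv).le) hL
    _ ≤ nuclearNorm L := trace_transpose_mul_le_nuclearNorm hA_contr L

/-- dual certificate: if `S̃ = UΣVᵀ` is an SVD and `A = UVᵀ` has strictly
negative entries at all off-support positions, then `S̃` minimizes the NTP-SVM program. -/
theorem stmt_10 (V m : ℕ) (hV : 2 ≤ V) (hm : 0 < m)
    (Ssets : Fin m → Finset (Fin V)) (hne : ∀ j, (Ssets j).Nonempty)
    (r : ℕ)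
    (U : Matrix (Fin V) (Fin r) ℝ) (Vm : Matrix (Fin m) (Fin r) ℝ) (σ : Fin r → ℝ)
    (hU : Uᵀ * U = 1) (hVm : Vmᵀ * Vm = 1) (hσ : ∀ i, 0 < σ i)
    (hSVD : Stil Ssets = U * Matrix.diagonal σ * Vmᵀ)
    (hcert : ∀ (j : Fin m) (v : Fin V), v ∉ Ssets j → (U * Vmᵀ) v j < 0) :
    svmFeasibleS Ssets (Stil Ssets) ∧
    ∀ L : Matrix (Fin V) (Fin m) ℝ, svmFeasibleS Ssets L →
      nuclearNorm (Stil Ssets) ≤ nuclearNorm L :=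
  stmt_10_general V m hV Ssets hne r U Vm σ hU hVm hσ hSVD hcert
end
end

section
/- Suppose L₁ ∈ ℝ^{V×m} satisfies the NTP-compatibility condition L₁[z,j] − L₁[z′,j] = log(p̂_{j,z}/p̂_{j,z′}) for all j ∈ {1,…,m} and all z, z′ ∈ S_j, and L₂ ∈ ℝ^{V×m} is feasible for the NTP-SVM program. Then for every ρ > 0 the matrix L_ρ := L₁ + ρ·L₂ satisfies H ≤ CE(L_ρ) ≤ H + V·e^{2‖L₁‖₂}·e^{−ρ}, where ‖·‖₂ is the spectral norm; in particular lim_{ρ→∞} CE(L_ρ) = H. Consequently, if in addition rank(L₁ + ρ·L₂) ≤ d for all ρ > 0, then for each ρ there exist W_ρ ∈ ℝ^{V×d} and H_ρ ∈ ℝ^{d×m} with W_ρ H_ρ = L_ρ and lim_{ρ→∞} CE(W_ρ H_ρ) = H. -/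
/-!
In every context `j`, compatibility of `L₁` and the constancy of `L₂` on the support `S_j` make
the softmax of `L_ρ = L₁ + ρ L₂`, renormalised on `S_j`, equal to `p̂_j`. Hence the contribution
of context `j` to `CE(L_ρ) - H` is `log (∑_v e^{L_ρ[v,j]} / ∑_{v ∈ S_j} e^{L_ρ[v,j]})`, which lies
between `0` and the off-support mass ratio (`log x ≤ x - 1`). The SVM margin and the entrywise
bound `|L₁[z,j]| ≤ ‖L₁‖₂` put every off-support logit at least `ρ - 2‖L₁‖₂` below any on-support
one, so that ratio is at most `V e^{2‖L₁‖₂} e^{-ρ}`. The factorisations come from factoring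
`L_ρ` through its column space, of dimension `rank L_ρ ≤ d`.
-/

open Filter Topology Matrix

noncomputable section

def entropyH {V m : ℕ} (piv : Fin m → ℝ) (p : Fin m → Fin V → ℝ) : ℝ :=
  - ∑ j, piv j * ∑ z ∈ Finset.univ.filter (fun z => 0 < p j z),
      p j z * Real.log (p j z)

/-- Feasibility for the NTP-SVM program (support sets `S_j = {z | 0 < p j z}`). -/
def svmFeasibleP {V m : ℕ} (p : Fin m → Fin V → ℝ) (L : Matrix (Fin V) (Fin m) ℝ) : Prop :=
  (∀ j z z', 0 < p j z → 0 < p j z' → L z j = L z' j) ∧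
  (∀ j z v, 0 < p j z → ¬ 0 < p j v → 1 ≤ L z j - L v j)

/-- Spectral norm: largest singular value of `A`. -/
def specNorm {a b : ℕ} (A : Matrix (Fin a) (Fin b) ℝ) : ℝ :=
  ⨆ i, Real.sqrt ((show (Aᵀ * A).IsHermitian by simpa using Matrix.isHermitian_conjTranspose_mul_self A).eigenvalues i)

namespace Matrix

theorem IsHermitian.exists_apply_self_le_eigenvalues {n : Type*} [Fintype n] [DecidableEq n]
    {B : Matrix n n ℝ} (hB : B.IsHermitian) (j : n) : ∃ k, B j j ≤ hB.eigenvalues k := by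
  have : Nonempty n := ⟨j⟩
  have hrow : ∑ k, hB.eigenvectorBasis k j ^ 2 = 1 := by
    have h := congrFun (congrFun (Unitary.coe_mul_star_self hB.eigenvectorUnitary) j) j
    simpa [mul_apply, sq] using h
  have hdiag : B j j = ∑ k, hB.eigenvalues k * hB.eigenvectorBasis k j ^ 2 := by
    conv_lhs => rw [hB.spectral_theorem]
    simp only [RCLike.ofReal_real_eq_id, CompTriple.comp_eq, Unitary.conjStarAlgAut_apply,
      mul_apply, eigenvectorUnitary_apply, diagonal_apply, mul_ite, mul_zero, Finset.sum_ite_eq',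
      Finset.mem_univ, ↓reduceIte, star_apply, star_trivial]
    exact Finset.sum_congr rfl fun k _ => by ring
  obtain ⟨k, hk⟩ := Finite.exists_max hB.eigenvalues
  refine ⟨k, ?_⟩
  calc B j j ≤ ∑ i, hB.eigenvalues k * hB.eigenvectorBasis i j ^ 2 :=
        hdiag ▸ Finset.sum_le_sum fun i _ => mul_le_mul_of_nonneg_right (hk i) (sq_nonneg _)
    _ = hB.eigenvalues k := by rw [← Finset.mul_sum, hrow, mul_one]

theorem sq_apply_le_transpose_mul_self_apply {m n : Type*} [Fintype m] (A : Matrix m n ℝ)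
    (z : m) (j : n) : A z j ^ 2 ≤ (Aᵀ * A) j j := by
  rw [mul_apply, sq]
  exact Finset.single_le_sum (f := fun v => Aᵀ j v * A v j) (fun v _ => mul_self_nonneg _)
    (Finset.mem_univ z)

theorem exists_mul_eq_of_rank_le {K m n : Type*} [Field K] [Fintype m] [Fintype n]
    (A : Matrix m n K) {d : ℕ} (h : A.rank ≤ d) :
    ∃ (W : Matrix m (Fin d) K) (H : Matrix (Fin d) n K), W * H = A := by
  classical
  set E := LinearMap.range A.mulVecLin
  have hE : Module.finrank K E ≤ d := h
  let b := Module.finBasis K E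
  let π : (Fin d → K) →ₗ[K] E :=
    b.equivFun.symm.toLinearMap ∘ₗ LinearMap.funLeft K K (Fin.castLE hE)
  have hπ : Function.Surjective π := b.equivFun.symm.surjective.comp
    (LinearMap.funLeft_surjective_of_injective _ _ _ (Fin.castLE_injective hE))
  obtain ⟨σ, hσ⟩ := π.exists_rightInverse_of_surjective (LinearMap.range_eq_top.mpr hπ)
  refine ⟨LinearMap.toMatrix' (E.subtype ∘ₗ π),
    LinearMap.toMatrix' (σ ∘ₗ A.mulVecLin.rangeRestrict), ?_⟩
  have hfac : (E.subtype ∘ₗ π) ∘ₗ σ ∘ₗ A.mulVecLin.rangeRestrict = A.mulVecLin := by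
    refine LinearMap.ext fun x => ?_
    change E.subtype ((π ∘ₗ σ) (A.mulVecLin.rangeRestrict x)) = _
    rw [hσ]
    rfl
  rw [← LinearMap.toMatrix'_comp, hfac, ← toLin'_apply', LinearMap.toMatrix'_toLin']

end Matrix

theorem abs_apply_le_specNorm {a b : ℕ} (A : Matrix (Fin a) (Fin b) ℝ) (z : Fin a) (j : Fin b) :
    |A z j| ≤ specNorm A := by
  have hB : (Aᵀ * A).IsHermitian := by
    simpa using isHermitian_conjTranspose_mul_self A
  obtain ⟨k, hk⟩ := hB.exists_apply_self_le_eigenvalues j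
  calc |A z j| = √(A z j ^ 2) := (Real.sqrt_sq_eq_abs _).symm
    _ ≤ √(hB.eigenvalues k) :=
        Real.sqrt_le_sqrt ((A.sq_apply_le_transpose_mul_self_apply z j).trans hk)
    _ ≤ specNorm A :=
        le_ciSup (f := fun i => √(hB.eigenvalues i)) (Set.finite_range _).bddAbove k

section Column

variable {ι : Type*} [Fintype ι] {q : ι → ℝ}

theorem sum_filter_pos_eq_one (hq₀ : ∀ z, 0 ≤ q z) (hq₁ : ∑ z, q z = 1) :
    ∑ z ∈ Finset.univ.filter (fun z => 0 < q z), q z = 1 := by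
  rw [Finset.sum_filter_of_ne fun z _ hz => (hq₀ z).lt_of_ne' hz, hq₁]

theorem exists_pos_of_sum_eq_one (hq₁ : ∑ z, q z = 1) : ∃ z, 0 < q z := by
  obtain ⟨z, -, hz⟩ := Finset.exists_lt_of_sum_lt (s := Finset.univ) (f := 0) (g := q)
    (by simp [hq₁])
  exact ⟨z, hz⟩

theorem exp_eq_mul_sum_exp_filter_pos {ℓ : ι → ℝ} (hq₀ : ∀ z, 0 ≤ q z) (hq₁ : ∑ z, q z = 1)
    (hℓ : ∀ z z', 0 < q z → 0 < q z' → ℓ z - ℓ z' = Real.log (q z / q z')) {z : ι}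
    (hz : 0 < q z) :
    Real.exp (ℓ z) = q z * ∑ v ∈ Finset.univ.filter (fun v => 0 < q v), Real.exp (ℓ v) := by
  have hterm : ∀ v ∈ Finset.univ.filter (fun v => 0 < q v),
      Real.exp (ℓ v) = q v * (Real.exp (ℓ z) / q z) := by
    intro v hv
    have hv : 0 < q v := (Finset.mem_filter.mp hv).2
    rw [← sub_add_cancel (ℓ v) (ℓ z), Real.exp_add, hℓ v z hv hz, Real.exp_log (div_pos hv hz)]
    ring
  rw [Finset.sum_congr rfl hterm, ← Finset.sum_mul, sum_filter_pos_eq_one hq₀ hq₁]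
  field_simp

theorem sum_mul_log_sub_log_softmax {ℓ : ι → ℝ} (hq₀ : ∀ z, 0 ≤ q z) (hq₁ : ∑ z, q z = 1)
    (hℓ : ∀ z z', 0 < q z → 0 < q z' → ℓ z - ℓ z' = Real.log (q z / q z')) :
    ∑ z ∈ Finset.univ.filter (fun z => 0 < q z),
        q z * (Real.log (q z) - Real.log (Real.exp (ℓ z) / ∑ v, Real.exp (ℓ v))) =
      Real.log ((∑ v, Real.exp (ℓ v)) /
        ∑ v ∈ Finset.univ.filter (fun v => 0 < q v), Real.exp (ℓ v)) := by
  have hgap : ∀ z ∈ Finset.univ.filter (fun z => 0 < q z),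
      Real.log (q z) - Real.log (Real.exp (ℓ z) / ∑ v, Real.exp (ℓ v)) =
        Real.log ((∑ v, Real.exp (ℓ v)) /
          ∑ v ∈ Finset.univ.filter (fun v => 0 < q v), Real.exp (ℓ v)) := by
    intro z hz
    have hz : 0 < q z := (Finset.mem_filter.mp hz).2
    have hexp := exp_eq_mul_sum_exp_filter_pos hq₀ hq₁ hℓ hz
    have hS : 0 < ∑ v ∈ Finset.univ.filter (fun v => 0 < q v), Real.exp (ℓ v) :=
      pos_of_mul_pos_right (hexp ▸ Real.exp_pos (ℓ z)) hz.le
    have hsum : 0 < ∑ v, Real.exp (ℓ v) :=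
      Finset.sum_pos (fun v _ => Real.exp_pos _) ⟨z, Finset.mem_univ z⟩
    rw [hexp, ← Real.log_div hz.ne' (by positivity)]
    congr 1
    field_simp
  rw [Finset.sum_congr rfl fun z hz => by rw [hgap z hz], ← Finset.sum_mul,
    sum_filter_pos_eq_one hq₀ hq₁, one_mul]

end Column

section LogSumExp

variable {ι : Type*} [Fintype ι] (ℓ : ι → ℝ) {s : Finset ι} {z₀ : ι}

theorem log_sum_exp_div_sum_exp_nonneg (hz₀ : z₀ ∈ s) :
    0 ≤ Real.log ((∑ v, Real.exp (ℓ v)) / ∑ v ∈ s, Real.exp (ℓ v)) := by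
  have hs : 0 < ∑ v ∈ s, Real.exp (ℓ v) := Finset.sum_pos (fun v _ => Real.exp_pos _) ⟨z₀, hz₀⟩
  refine Real.log_nonneg ((one_le_div hs).mpr ?_)
  exact Finset.sum_le_sum_of_subset_of_nonneg (Finset.subset_univ s)
    fun v _ _ => (Real.exp_pos _).le

theorem log_sum_exp_div_sum_exp_le [DecidableEq ι] (hz₀ : z₀ ∈ s) :
    Real.log ((∑ v, Real.exp (ℓ v)) / ∑ v ∈ s, Real.exp (ℓ v)) ≤
      ∑ v ∈ sᶜ, Real.exp (ℓ v - ℓ z₀) := by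
  have hs : 0 < ∑ v ∈ s, Real.exp (ℓ v) := Finset.sum_pos (fun v _ => Real.exp_pos _) ⟨z₀, hz₀⟩
  have hsum : 0 < ∑ v, Real.exp (ℓ v) := Finset.sum_pos (fun v _ => Real.exp_pos _) ⟨z₀, by simp⟩
  have hz₀le : Real.exp (ℓ z₀) ≤ ∑ v ∈ s, Real.exp (ℓ v) :=
    Finset.single_le_sum (fun v _ => (Real.exp_pos _).le) hz₀
  calc _ ≤ (∑ v, Real.exp (ℓ v)) / ∑ v ∈ s, Real.exp (ℓ v) - 1 :=
        Real.log_le_sub_one_of_pos (div_pos hsum hs)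
    _ = (∑ v ∈ sᶜ, Real.exp (ℓ v)) / ∑ v ∈ s, Real.exp (ℓ v) := by
        rw [← Finset.sum_add_sum_compl s, add_div, div_self hs.ne']; ring
    _ ≤ (∑ v ∈ sᶜ, Real.exp (ℓ v)) / Real.exp (ℓ z₀) :=
        div_le_div_of_nonneg_left (Finset.sum_nonneg fun v _ => (Real.exp_pos _).le)
          (Real.exp_pos _) hz₀le
    _ = _ := by rw [Finset.sum_div]; simp only [Real.exp_sub]

end LogSumExp

section NTP

variable {V m : ℕ} {piv : Fin m → ℝ} {p : Fin m → Fin V → ℝ}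

theorem CEloss_sub_entropyH_eq_sum_log (hp : ∀ j z, 0 ≤ p j z) (hpsum : ∀ j, ∑ z, p j z = 1)
    {L : Matrix (Fin V) (Fin m) ℝ}
    (hL : ∀ j z z', 0 < p j z → 0 < p j z' → L z j - L z' j = Real.log (p j z / p j z')) :
    CEloss piv p L - entropyH piv p = ∑ j, piv j * Real.log ((∑ v, Real.exp (L v j)) /
      ∑ v ∈ Finset.univ.filter (fun v => 0 < p j v), Real.exp (L v j)) := by
  simp only [CEloss, entropyH, sub_neg_eq_add, neg_add_eq_sub, ← Finset.sum_sub_distrib,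
    ← mul_sub]
  refine Finset.sum_congr rfl fun j _ => congrArg (piv j * ·) ?_
  exact sum_mul_log_sub_log_softmax (hp j) (hpsum j) (ℓ := fun z => L z j) (hL j)

theorem add_smul_sub_add_smul_eq_log (L₁ L₂ : Matrix (Fin V) (Fin m) ℝ)
    (hL₁ : ∀ j z z', 0 < p j z → 0 < p j z' → L₁ z j - L₁ z' j = Real.log (p j z / p j z'))
    (hL₂ : svmFeasibleP p L₂) (ρ : ℝ) (j : Fin m) (z z' : Fin V) (hz : 0 < p j z)
    (hz' : 0 < p j z') :
    (L₁ + ρ • L₂) z j - (L₁ + ρ • L₂) z' j = Real.log (p j z / p j z') := by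
  simp only [Matrix.add_apply, Matrix.smul_apply, smul_eq_mul, hL₂.1 j z z' hz hz', ← hL₁ j z z' hz hz']
  ring

theorem add_smul_sub_add_smul_le (L₁ L₂ : Matrix (Fin V) (Fin m) ℝ) (hL₂ : svmFeasibleP p L₂)
    {ρ : ℝ} (hρ : 0 ≤ ρ) {j : Fin m} {z v : Fin V} (hz : 0 < p j z) (hv : ¬ 0 < p j v) :
    (L₁ + ρ • L₂) v j - (L₁ + ρ • L₂) z j ≤ 2 * specNorm L₁ - ρ := by
  have hmargin : ρ ≤ ρ * (L₂ z j - L₂ v j) := le_mul_of_one_le_right hρ (hL₂.2 j z v hz hv)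
  have hv₁ := abs_le.mp (abs_apply_le_specNorm L₁ v j)
  have hz₁ := abs_le.mp (abs_apply_le_specNorm L₁ z j)
  simp only [Matrix.add_apply, Matrix.smul_apply, smul_eq_mul]
  linarith [hv₁.1, hv₁.2, hz₁.1, hz₁.2]

theorem log_sum_exp_add_smul_le (hpsum : ∀ j, ∑ z, p j z = 1)
    (L₁ L₂ : Matrix (Fin V) (Fin m) ℝ) (hL₂ : svmFeasibleP p L₂) {ρ : ℝ} (hρ : 0 ≤ ρ)
    (j : Fin m) :
    Real.log ((∑ v, Real.exp ((L₁ + ρ • L₂) v j)) /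
        ∑ v ∈ Finset.univ.filter (fun v => 0 < p j v), Real.exp ((L₁ + ρ • L₂) v j)) ≤
      V * Real.exp (2 * specNorm L₁) * Real.exp (-ρ) := by
  obtain ⟨z₀, hpz₀⟩ := exists_pos_of_sum_eq_one (hpsum j)
  refine (log_sum_exp_div_sum_exp_le (fun v => (L₁ + ρ • L₂) v j)
    (Finset.mem_filter.mpr ⟨Finset.mem_univ z₀, hpz₀⟩)).trans ?_
  calc ∑ v ∈ (Finset.univ.filter (fun v => 0 < p j v))ᶜ,
        Real.exp ((L₁ + ρ • L₂) v j - (L₁ + ρ • L₂) z₀ j)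
      ≤ ∑ _v ∈ (Finset.univ.filter (fun v => 0 < p j v))ᶜ, Real.exp (2 * specNorm L₁ - ρ) :=
        Finset.sum_le_sum fun v hv => Real.exp_le_exp.mpr <|
          add_smul_sub_add_smul_le L₁ L₂ hL₂ hρ hpz₀ (by simpa using hv)
    _ ≤ V * Real.exp (2 * specNorm L₁ - ρ) := by
        rw [Finset.sum_const, nsmul_eq_mul]
        gcongr
        exact_mod_cast (Finset.card_le_univ _).trans_eq (Fintype.card_fin V)
    _ = V * Real.exp (2 * specNorm L₁) * Real.exp (-ρ) := by
        rw [sub_eq_add_neg, Real.exp_add, mul_assoc]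

theorem entropyH_le_CEloss_add_smul (hpiv : ∀ j, 0 ≤ piv j) (hp : ∀ j z, 0 ≤ p j z)
    (hpsum : ∀ j, ∑ z, p j z = 1) (L₁ L₂ : Matrix (Fin V) (Fin m) ℝ)
    (hL₁ : ∀ j z z', 0 < p j z → 0 < p j z' → L₁ z j - L₁ z' j = Real.log (p j z / p j z'))
    (hL₂ : svmFeasibleP p L₂) (ρ : ℝ) :
    entropyH piv p ≤ CEloss piv p (L₁ + ρ • L₂) := by
  rw [← sub_nonneg, CEloss_sub_entropyH_eq_sum_log hp hpsum
    (add_smul_sub_add_smul_eq_log L₁ L₂ hL₁ hL₂ ρ)]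
  refine Finset.sum_nonneg fun j _ => mul_nonneg (hpiv j) ?_
  obtain ⟨z₀, hz₀⟩ := exists_pos_of_sum_eq_one (hpsum j)
  exact log_sum_exp_div_sum_exp_nonneg _ (Finset.mem_filter.mpr ⟨Finset.mem_univ z₀, hz₀⟩)

theorem CEloss_add_smul_le (hpiv : ∀ j, 0 ≤ piv j) (hpisum : ∑ j, piv j = 1)
    (hp : ∀ j z, 0 ≤ p j z) (hpsum : ∀ j, ∑ z, p j z = 1) (L₁ L₂ : Matrix (Fin V) (Fin m) ℝ)
    (hL₁ : ∀ j z z', 0 < p j z → 0 < p j z' → L₁ z j - L₁ z' j = Real.log (p j z / p j z'))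
    (hL₂ : svmFeasibleP p L₂) {ρ : ℝ} (hρ : 0 ≤ ρ) :
    CEloss piv p (L₁ + ρ • L₂) ≤
      entropyH piv p + V * Real.exp (2 * specNorm L₁) * Real.exp (-ρ) := by
  rw [← sub_le_iff_le_add', CEloss_sub_entropyH_eq_sum_log hp hpsum
    (add_smul_sub_add_smul_eq_log L₁ L₂ hL₁ hL₂ ρ)]
  calc _ ≤ ∑ j, piv j * (V * Real.exp (2 * specNorm L₁) * Real.exp (-ρ)) :=
        Finset.sum_le_sum fun j _ => mul_le_mul_of_nonneg_left
          (log_sum_exp_add_smul_le hpsum L₁ L₂ hL₂ hρ j) (hpiv j)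
    _ = _ := by rw [← Finset.sum_mul, hpisum, one_mul]

theorem tendsto_CEloss_add_smul (hpiv : ∀ j, 0 ≤ piv j) (hpisum : ∑ j, piv j = 1)
    (hp : ∀ j z, 0 ≤ p j z) (hpsum : ∀ j, ∑ z, p j z = 1) (L₁ L₂ : Matrix (Fin V) (Fin m) ℝ)
    (hL₁ : ∀ j z z', 0 < p j z → 0 < p j z' → L₁ z j - L₁ z' j = Real.log (p j z / p j z'))
    (hL₂ : svmFeasibleP p L₂) :
    Tendsto (fun ρ : ℝ => CEloss piv p (L₁ + ρ • L₂)) atTop (𝓝 (entropyH piv p)) := by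
  have hupper : Tendsto (fun ρ : ℝ => entropyH piv p +
      V * Real.exp (2 * specNorm L₁) * Real.exp (-ρ)) atTop (𝓝 (entropyH piv p)) := by
    simpa using tendsto_const_nhds.add
      (Real.tendsto_exp_neg_atTop_nhds_zero.const_mul (V * Real.exp (2 * specNorm L₁)))
  refine tendsto_of_tendsto_of_tendsto_of_le_of_le' tendsto_const_nhds hupper
    (Eventually.of_forall (entropyH_le_CEloss_add_smul hpiv hp hpsum L₁ L₂ hL₁ hL₂)) ?_
  filter_upwards [eventually_ge_atTop 0] with ρ hρ
  exact CEloss_add_smul_le hpiv hpisum hp hpsum L₁ L₂ hL₁ hL₂ hρ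

end NTP

theorem stmt_11_general (V m d : ℕ)
    (piv : Fin m → ℝ) (hpiv : ∀ j, 0 < piv j) (hpisum : ∑ j, piv j = 1)
    (p : Fin m → Fin V → ℝ) (hp : ∀ j z, 0 ≤ p j z) (hpsum : ∀ j, ∑ z, p j z = 1)
    (L₁ L₂ : Matrix (Fin V) (Fin m) ℝ)
    (hL₁ : ∀ j z z', 0 < p j z → 0 < p j z' →
        L₁ z j - L₁ z' j = Real.log (p j z / p j z'))
    (hL₂ : svmFeasibleP p L₂) :
    (∀ ρ : ℝ, 0 < ρ →
        entropyH piv p ≤ CEloss piv p (L₁ + ρ • L₂) ∧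
        CEloss piv p (L₁ + ρ • L₂) ≤
          entropyH piv p + (V : ℝ) * Real.exp (2 * specNorm L₁) * Real.exp (-ρ)) ∧
    Tendsto (fun ρ : ℝ => CEloss piv p (L₁ + ρ • L₂)) atTop (𝓝 (entropyH piv p)) ∧
    ((∀ ρ : ℝ, 0 < ρ → (L₁ + ρ • L₂).rank ≤ d) →
      ∃ (W : ℝ → Matrix (Fin V) (Fin d) ℝ) (H : ℝ → Matrix (Fin d) (Fin m) ℝ),
        (∀ ρ : ℝ, 0 < ρ → W ρ * H ρ = L₁ + ρ • L₂) ∧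
        Tendsto (fun ρ : ℝ => CEloss piv p (W ρ * H ρ)) atTop (𝓝 (entropyH piv p))) := by
  have hpiv₀ : ∀ j, 0 ≤ piv j := fun j => (hpiv j).le
  have htend := tendsto_CEloss_add_smul hpiv₀ hpisum hp hpsum L₁ L₂ hL₁ hL₂
  refine ⟨fun ρ hρ => ⟨entropyH_le_CEloss_add_smul hpiv₀ hp hpsum L₁ L₂ hL₁ hL₂ ρ,
    CEloss_add_smul_le hpiv₀ hpisum hp hpsum L₁ L₂ hL₁ hL₂ hρ.le⟩, htend, fun hrank => ?_⟩
  have hfac : ∀ ρ : ℝ, ∃ (W : Matrix (Fin V) (Fin d) ℝ) (H : Matrix (Fin d) (Fin m) ℝ),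
      0 < ρ → W * H = L₁ + ρ • L₂ := by
    intro ρ
    by_cases hρ : 0 < ρ
    · obtain ⟨W, H, hWH⟩ := (L₁ + ρ • L₂).exists_mul_eq_of_rank_le (hrank ρ hρ)
      exact ⟨W, H, fun _ => hWH⟩
    · exact ⟨0, 0, fun h => absurd h hρ⟩
  choose W H hWH using hfac
  refine ⟨W, H, hWH, htend.congr' ?_⟩
  filter_upwards [eventually_gt_atTop 0] with ρ hρ
  rw [hWH ρ hρ]

/-- if `L₁` is NTP-compatible and `L₂` is NTP-SVM feasible, then
`L_ρ = L₁ + ρ L₂` satisfies `H ≤ CE(L_ρ) ≤ H + V e^{2‖L₁‖₂} e^{−ρ}`, so `CE(L_ρ) → H`;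
if moreover `rank(L₁ + ρ L₂) ≤ d` for all ρ > 0, then `L_ρ` admits factorizations
`W_ρ H_ρ = L_ρ` with `CE(W_ρ H_ρ) → H`. -/
theorem stmt_11 (V m d : ℕ) (hV : 2 ≤ V) (hm : 0 < m) (hd : 0 < d)
    (piv : Fin m → ℝ) (hpiv : ∀ j, 0 < piv j) (hpisum : ∑ j, piv j = 1)
    (p : Fin m → Fin V → ℝ) (hp : ∀ j z, 0 ≤ p j z) (hpsum : ∀ j, ∑ z, p j z = 1)
    (L₁ L₂ : Matrix (Fin V) (Fin m) ℝ)
    (hL₁ : ∀ j z z', 0 < p j z → 0 < p j z' →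
        L₁ z j - L₁ z' j = Real.log (p j z / p j z'))
    (hL₂ : svmFeasibleP p L₂) :
    (∀ ρ : ℝ, 0 < ρ →
        entropyH piv p ≤ CEloss piv p (L₁ + ρ • L₂) ∧
        CEloss piv p (L₁ + ρ • L₂) ≤
          entropyH piv p + (V : ℝ) * Real.exp (2 * specNorm L₁) * Real.exp (-ρ)) ∧
    Tendsto (fun ρ : ℝ => CEloss piv p (L₁ + ρ • L₂)) atTop (𝓝 (entropyH piv p)) ∧
    ((∀ ρ : ℝ, 0 < ρ → (L₁ + ρ • L₂).rank ≤ d) →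
      ∃ (W : ℝ → Matrix (Fin V) (Fin d) ℝ) (H : ℝ → Matrix (Fin d) (Fin m) ℝ),
        (∀ ρ : ℝ, 0 < ρ → W ρ * H ρ = L₁ + ρ • L₂) ∧
        Tendsto (fun ρ : ℝ => CEloss piv p (W ρ * H ρ)) atTop (𝓝 (entropyH piv p))) :=
  stmt_11_general V m d piv hpiv hpisum p hp hpsum L₁ L₂ hL₁ hL₂
end
end

section
/- If d ≥ V, then the infimum over W ∈ ℝ^{V×d} and H ∈ ℝ^{d×m} of CE(WH) equals the empirical entropy H. Moreover, under the sparsity ansatz this infimum is not attained: CE(WH) > H for every W ∈ ℝ^{V×d} and H ∈ ℝ^{d×m}. -/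
open Filter Topology Matrix

noncomputable section

/-!
The loss decomposes column by column: `CE(L) - H = ∑ⱼ π̂ⱼ KL(p̂ⱼ ‖ softmax Lⱼ)`, and the Gibbs
inequality `a - b ≤ a log a - a log b` shows that the `j`-th summand is at least the softmax mass
that column `j` puts outside the support `Sⱼ`. This mass is positive, so the gap is strictly
positive as soon as some `Sⱼ` is not everything. Conversely, the logits `L[z, j] = log (p̂ⱼ[z] + δ)`
have softmax `(p̂ⱼ + δ) / (1 + V δ)`, which tends to `p̂ⱼ` as `δ → 0⁺`, so `CE` comes arbitrarily
close to `H`; when `d ≥ V` every logit matrix is of the form `W H`.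
-/

open Real Finset

theorem Matrix.exists_mul_eq_of_le {R ι : Type*} [Semiring R] {V d : ℕ} (hVd : V ≤ d)
    (L : Matrix (Fin V) ι R) :
    ∃ (W : Matrix (Fin V) (Fin d) R) (H : Matrix (Fin d) ι R), W * H = L := by
  refine ⟨(1 : Matrix (Fin d) (Fin d) R).submatrix (Fin.castLE hVd) id,
    Matrix.of fun i j => if h : (i : ℕ) < V then L ⟨i, h⟩ j else 0, ?_⟩
  rw [← submatrix_id_id (Matrix.of _), ← submatrix_mul _ _ _ _ _ Function.bijective_id,
    Matrix.one_mul]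
  ext z j
  simp [z.isLt]

theorem Real.sub_le_mul_log_sub_mul_log {a b : ℝ} (ha : 0 < a) (hb : 0 < b) :
    a - b ≤ a * log a - a * log b := by
  have h := mul_le_mul_of_nonneg_left (one_sub_inv_le_log_of_pos (div_pos ha hb)) ha.le
  rwa [inv_div, log_div ha.ne' hb.ne', mul_sub, mul_sub, mul_one, mul_div_cancel₀ _ ha.ne'] at h

section Softmax

variable {ι : Type*} [Fintype ι]

theorem Fintype.nonempty_of_sum_eq_one {M : Type*} [AddCommMonoidWithOne M] [NeZero (1 : M)]
    {f : ι → M} (h : ∑ z, f z = 1) : Nonempty ι :=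
  univ_nonempty_iff.1 (nonempty_of_sum_ne_zero (h ▸ one_ne_zero))

def softmax (l : ι → ℝ) (z : ι) : ℝ := exp (l z) / ∑ v, exp (l v)

theorem softmax_pos [Nonempty ι] (l : ι → ℝ) (z : ι) : 0 < softmax l z :=
  div_pos (exp_pos _) (sum_pos (fun _ _ => exp_pos _) univ_nonempty)

theorem sum_softmax [Nonempty ι] (l : ι → ℝ) : ∑ z, softmax l z = 1 := by
  simp only [softmax]
  rw [← sum_div, div_self (sum_pos (fun _ _ => exp_pos _) univ_nonempty).ne']

theorem softmax_log_add {p : ι → ℝ} (hp : ∀ z, 0 ≤ p z) (hpsum : ∑ z, p z = 1) {δ : ℝ}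
    (hδ : 0 < δ) (z : ι) :
    softmax (fun v => log (p v + δ)) z = (p z + δ) / (1 + Fintype.card ι * δ) := by
  have hexp : ∀ v, exp (log (p v + δ)) = p v + δ := fun v => exp_log (by linarith [hp v])
  simp only [softmax, hexp, sum_add_distrib, hpsum, sum_const, card_univ, nsmul_eq_mul]

theorem sum_filter_not_le_sum_mul_log_sub {p q : ι → ℝ} (hp : ∀ z, 0 ≤ p z)
    (hpsum : ∑ z, p z = 1) (hq : ∀ z, 0 < q z) (hqsum : ∑ z, q z = 1) :
    ∑ z with ¬ 0 < p z, q z ≤ ∑ z with 0 < p z, (p z * log (p z) - p z * log (q z)) := by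
  have hpS : ∑ z with 0 < p z, p z = 1 :=
    (sum_filter_of_ne fun z _ hz => (hp z).lt_of_ne' hz).trans hpsum
  calc ∑ z with ¬ 0 < p z, q z = ∑ z with 0 < p z, p z - ∑ z with 0 < p z, q z := by
        linarith [sum_filter_add_sum_filter_not univ (fun z => 0 < p z) q]
    _ = ∑ z with 0 < p z, (p z - q z) := (sum_sub_distrib _ _).symm
    _ ≤ _ := sum_le_sum fun z hz => sub_le_mul_log_sub_mul_log (mem_filter.1 hz).2 (hq z)

theorem sum_filter_not_softmax_le {p : ι → ℝ} (hp : ∀ z, 0 ≤ p z) (hpsum : ∑ z, p z = 1)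
    (l : ι → ℝ) :
    ∑ z with ¬ 0 < p z, softmax l z ≤
      ∑ z with 0 < p z, (p z * log (p z) - p z * log (softmax l z)) := by
  have := Fintype.nonempty_of_sum_eq_one hpsum
  exact sum_filter_not_le_sum_mul_log_sub hp hpsum (softmax_pos l) (sum_softmax l)

theorem sum_mul_log_sub_softmax_nonneg {p : ι → ℝ} (hp : ∀ z, 0 ≤ p z)
    (hpsum : ∑ z, p z = 1) (l : ι → ℝ) :
    0 ≤ ∑ z with 0 < p z, (p z * log (p z) - p z * log (softmax l z)) := by
  have := Fintype.nonempty_of_sum_eq_one hpsum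
  exact (sum_nonneg fun z _ => (softmax_pos l z).le).trans (sum_filter_not_softmax_le hp hpsum l)

theorem sum_mul_log_sub_softmax_pos {p : ι → ℝ} (hp : ∀ z, 0 ≤ p z) (hpsum : ∑ z, p z = 1)
    {v : ι} (hv : ¬ 0 < p v) (l : ι → ℝ) :
    0 < ∑ z with 0 < p z, (p z * log (p z) - p z * log (softmax l z)) := by
  have := Fintype.nonempty_of_sum_eq_one hpsum
  refine lt_of_lt_of_le ?_ (sum_filter_not_softmax_le hp hpsum l)
  exact sum_pos' (fun z _ => (softmax_pos l z).le) ⟨v, by simpa using hv, softmax_pos l v⟩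

end Softmax

section CrossEntropy

variable {V m : ℕ} {piv : Fin m → ℝ} {p : Fin m → Fin V → ℝ}

theorem CEloss_sub_entropyH (L : Matrix (Fin V) (Fin m) ℝ) :
    CEloss piv p L - entropyH piv p = ∑ j, piv j * ∑ z with 0 < p j z,
      (p j z * log (p j z) - p j z * log (softmax (fun v => L v j) z)) := by
  simp only [CEloss, entropyH, softmax, neg_sub_neg, ← sum_sub_distrib, ← mul_sub]

theorem entropyH_le_CEloss (hpiv : ∀ j, 0 ≤ piv j) (hp : ∀ j z, 0 ≤ p j z)
    (hpsum : ∀ j, ∑ z, p j z = 1) (L : Matrix (Fin V) (Fin m) ℝ) :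
    entropyH piv p ≤ CEloss piv p L := by
  rw [← sub_nonneg, CEloss_sub_entropyH]
  exact sum_nonneg fun j _ =>
    mul_nonneg (hpiv j) (sum_mul_log_sub_softmax_nonneg (hp j) (hpsum j) _)

theorem entropyH_lt_CEloss (hpiv : ∀ j, 0 < piv j) (hp : ∀ j z, 0 ≤ p j z)
    (hpsum : ∀ j, ∑ z, p j z = 1) (hsparse : ∃ j v, ¬ 0 < p j v)
    (L : Matrix (Fin V) (Fin m) ℝ) :
    entropyH piv p < CEloss piv p L := by
  obtain ⟨j₀, v, hv⟩ := hsparse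
  rw [← sub_pos, CEloss_sub_entropyH]
  refine sum_pos' (fun j _ => ?_) ⟨j₀, mem_univ _, ?_⟩
  · exact mul_nonneg (hpiv j).le (sum_mul_log_sub_softmax_nonneg (hp j) (hpsum j) _)
  · exact mul_pos (hpiv j₀) (sum_mul_log_sub_softmax_pos (hp j₀) (hpsum j₀) hv _)

theorem tendsto_CEloss_log_add (hp : ∀ j z, 0 ≤ p j z) (hpsum : ∀ j, ∑ z, p j z = 1) :
    Tendsto (fun δ => CEloss piv p (Matrix.of fun z j => log (p j z + δ))) (𝓝[>] 0)
      (𝓝 (entropyH piv p)) := by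
  set g : ℝ → ℝ := fun δ =>
    -∑ j, piv j * ∑ z with 0 < p j z, p j z * log ((p j z + δ) / (1 + V * δ))
  have hg : Tendsto g (𝓝 0) (𝓝 (entropyH piv p)) := by
    have hg0 : g 0 = entropyH piv p := by simp [g, entropyH]
    rw [← hg0]
    refine (tendsto_finsetSum _ fun j _ => (tendsto_finsetSum _ fun z hz => ?_).const_mul _).neg
    have hpz := (mem_filter.1 hz).2
    refine ContinuousAt.tendsto (f := fun δ : ℝ => p j z * log ((p j z + δ) / (1 + V * δ))) ?_
    fun_prop (disch := simp [hpz.ne'])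
  refine (hg.mono_left nhdsWithin_le_nhds).congr' ?_
  filter_upwards [self_mem_nhdsWithin] with δ hδ
  have hsoftmax : ∀ j z, exp (log (p j z + δ)) / ∑ v, exp (log (p j v + δ)) =
      (p j z + δ) / (1 + V * δ) := fun j z =>
    (softmax_log_add (hp j) (hpsum j) hδ.out z).trans (by rw [Fintype.card_fin])
  simp only [g, CEloss, Matrix.of_apply, hsoftmax]

theorem sInf_range_CEloss (hpiv : ∀ j, 0 ≤ piv j) (hp : ∀ j z, 0 ≤ p j z)
    (hpsum : ∀ j, ∑ z, p j z = 1) :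
    sInf (Set.range (CEloss piv p)) = entropyH piv p := by
  refine IsGLB.csInf_eq ⟨?_, fun b hb => ?_⟩ (Set.range_nonempty _)
  · rintro _ ⟨L, rfl⟩
    exact entropyH_le_CEloss hpiv hp hpsum L
  · exact ge_of_tendsto (tendsto_CEloss_log_add hp hpsum)
      (Eventually.of_forall fun δ => hb (Set.mem_range_self _))

end CrossEntropy

theorem stmt_12_general (V m d : ℕ)
    (piv : Fin m → ℝ) (hpiv : ∀ j, 0 < piv j)
    (p : Fin m → Fin V → ℝ) (hp : ∀ j z, 0 ≤ p j z) (hpsum : ∀ j, ∑ z, p j z = 1)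
    (hdV : V ≤ d) :
    sInf {c : ℝ | ∃ (W : Matrix (Fin V) (Fin d) ℝ) (H : Matrix (Fin d) (Fin m) ℝ),
        c = CEloss piv p (W * H)} = entropyH piv p ∧
    ((∃ j, ∃ v, ¬ 0 < p j v) →
      ∀ (W : Matrix (Fin V) (Fin d) ℝ) (H : Matrix (Fin d) (Fin m) ℝ),
        entropyH piv p < CEloss piv p (W * H)) := by
  have hrange : {c : ℝ | ∃ (W : Matrix (Fin V) (Fin d) ℝ) (H : Matrix (Fin d) (Fin m) ℝ),
      c = CEloss piv p (W * H)} = Set.range (CEloss piv p) := by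
    ext c
    constructor
    · rintro ⟨W, H, rfl⟩
      exact ⟨W * H, rfl⟩
    · rintro ⟨L, rfl⟩
      obtain ⟨W, H, hWH⟩ := Matrix.exists_mul_eq_of_le hdV L
      exact ⟨W, H, by rw [hWH]⟩
  refine ⟨?_, fun hsparse W H => entropyH_lt_CEloss hpiv hp hpsum hsparse (W * H)⟩
  rw [hrange]
  exact sInf_range_CEloss (fun j => (hpiv j).le) hp hpsum

/-- if `d ≥ V`, the infimum over `W, H` of `CE(WH)` equals the empirical entropy
`H`, and under the sparsity ansatz this infimum is not attained: `CE(WH) > H` always. -/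
theorem stmt_12 (V m d : ℕ) (hV : 2 ≤ V) (hm : 0 < m) (hd : 0 < d)
    (piv : Fin m → ℝ) (hpiv : ∀ j, 0 < piv j) (hpisum : ∑ j, piv j = 1)
    (p : Fin m → Fin V → ℝ) (hp : ∀ j z, 0 ≤ p j z) (hpsum : ∀ j, ∑ z, p j z = 1)
    (hdV : V ≤ d) :
    sInf {c : ℝ | ∃ (W : Matrix (Fin V) (Fin d) ℝ) (H : Matrix (Fin d) (Fin m) ℝ),
        c = CEloss piv p (W * H)} = entropyH piv p ∧
    ((∃ j, ∃ v, ¬ 0 < p j v) →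
      ∀ (W : Matrix (Fin V) (Fin d) ℝ) (H : Matrix (Fin d) (Fin m) ℝ),
        entropyH piv p < CEloss piv p (W * H)) :=
  stmt_12_general V m d piv hpiv p hp hpsum hdV
end
end

section
/- Define the in-support loss CE_in(L) := −∑_{j=1}^m π̂_j ∑_{z∈S_j} p̂_{j,z} log( exp(L[z,j]) / ∑_{z′∈S_j} exp(L[z′,j]) ). For every L ∈ ℝ^{V×m} and every L′ ∈ F_⊥ satisfying L′[z,j] − L′[v,j] ≥ 1 for all j ∈ {1,…,m}, z ∈ S_j, and v ∉ S_j, one has lim_{R→∞} CE(L + R·L′) = CE_in(L). Moreover, under the sparsity ansatz, CE(L) > CE_in(L) ≥ H for every L ∈ ℝ^{V×m}. -/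
/-!
Both losses are weighted sums of log-softmax values, normalised over the whole vocabulary for `CE`
and over the support `S_j` only for `CE_in`. Along `L + R • L'` the logits inside `S_j` move
together (since `L' ⊥ F`) and lie a margin above those outside, so after subtracting their common
shift the exponentials outside `S_j` vanish as `R → ∞` and the full normaliser tends to the
in-support one. Enlarging the normaliser strictly (when `S_j ≠ univ`) strictly lowers the
log-softmax, which gives `CE_in < CE`, and `H ≤ CE_in` is Gibbs' inequality against the
in-support softmax distribution.
-/

open Filter Topology Matrix

noncomputable section

/-- The in-support NTP loss `CE_in`. -/
def CEin {V m : ℕ} (piv : Fin m → ℝ) (p : Fin m → Fin V → ℝ)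
    (L : Matrix (Fin V) (Fin m) ℝ) : ℝ :=
  - ∑ j, piv j * ∑ z ∈ Finset.univ.filter (fun z => 0 < p j z),
      p j z * Real.log (Real.exp (L z j) /
        ∑ z' ∈ Finset.univ.filter (fun z' => 0 < p j z'), Real.exp (L z' j))

/-- The subspace `F`: span of the matrices `(e_z − e_{z'}) ẽ_jᵀ` over `j` and `z, z' ∈ S_j`. -/
def Fsub {V m : ℕ} (p : Fin m → Fin V → ℝ) : Submodule ℝ (Matrix (Fin V) (Fin m) ℝ) :=
  Submodule.span ℝ {M | ∃ j z z', 0 < p j z ∧ 0 < p j z' ∧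
    M = Matrix.single z j 1 - Matrix.single z' j 1}

/-- Frobenius inner product of matrices. -/
def frobInner {a b : ℕ} (X Y : Matrix (Fin a) (Fin b) ℝ) : ℝ := ∑ i, ∑ j, X i j * Y i j

open Real Finset

section LogSoftmax

variable {ι : Type*}

def logSoftmax (s : Finset ι) (f : ι → ℝ) (z : ι) : ℝ :=
  log (exp (f z) / ∑ v ∈ s, exp (f v))

lemma logSoftmax_eq_sub_log_sum {s : Finset ι} (hs : s.Nonempty) (f : ι → ℝ) (z : ι) :
    logSoftmax s f z = f z - log (∑ v ∈ s, exp (f v)) := by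
  rw [logSoftmax, log_div (exp_ne_zero _) (sum_pos (fun v _ => exp_pos _) hs).ne', log_exp]

lemma logSoftmax_add_const (s : Finset ι) (f : ι → ℝ) (c : ℝ) (z : ι) :
    logSoftmax s (fun v => f v + c) z = logSoftmax s f z := by
  simp only [logSoftmax, exp_add, ← sum_mul, mul_div_mul_right _ _ (exp_ne_zero c)]

lemma logSoftmax_le_of_subset {s t : Finset ι} (hs : s.Nonempty) (hst : s ⊆ t)
    (f : ι → ℝ) (z : ι) : logSoftmax t f z ≤ logSoftmax s f z := by
  rw [logSoftmax_eq_sub_log_sum hs, logSoftmax_eq_sub_log_sum (hs.mono hst)]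
  gcongr

lemma logSoftmax_lt_of_ssubset {s t : Finset ι} (hs : s.Nonempty) (hst : s ⊂ t)
    (f : ι → ℝ) (z : ι) : logSoftmax t f z < logSoftmax s f z := by
  obtain ⟨w, hwt, hws⟩ := exists_of_ssubset hst
  rw [logSoftmax_eq_sub_log_sum hs, logSoftmax_eq_sub_log_sum (hs.mono hst.subset),
    sub_lt_sub_iff_left]
  exact log_lt_log (sum_pos (fun v _ => exp_pos _) hs)
    (sum_lt_sum_of_subset hst.subset hwt hws (exp_pos _) fun v _ _ => (exp_pos _).le)

/-- Gibbs' inequality. -/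
lemma sum_mul_log_le_sum_mul_log_self {s : Finset ι} {q r : ι → ℝ}
    (hq : ∀ z ∈ s, 0 < q z) (hr : ∀ z ∈ s, 0 < r z)
    (hrq : ∑ z ∈ s, r z ≤ ∑ z ∈ s, q z) :
    ∑ z ∈ s, q z * log (r z) ≤ ∑ z ∈ s, q z * log (q z) := by
  have hterm : ∀ z ∈ s, q z * log (r z) - q z * log (q z) ≤ r z - q z := by
    intro z hz
    have hlog := log_le_sub_one_of_pos (div_pos (hr z hz) (hq z hz))
    rw [log_div (hr z hz).ne' (hq z hz).ne'] at hlog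
    have := mul_le_mul_of_nonneg_left hlog (hq z hz).le
    rwa [mul_sub, mul_sub, mul_div_cancel₀ _ (hq z hz).ne', mul_one] at this
  have := sum_le_sum hterm
  rw [sum_sub_distrib, sum_sub_distrib] at this
  linarith

lemma sum_mul_logSoftmax_le_sum_mul_log {s : Finset ι} {q : ι → ℝ}
    (hq : ∀ z ∈ s, 0 < q z) (hqs : ∑ z ∈ s, q z = 1) (f : ι → ℝ) :
    ∑ z ∈ s, q z * logSoftmax s f z ≤ ∑ z ∈ s, q z * log (q z) := by
  have hs : s.Nonempty := nonempty_of_sum_ne_zero (by rw [hqs]; exact one_ne_zero)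
  have hZ : 0 < ∑ v ∈ s, exp (f v) := sum_pos (fun v _ => exp_pos _) hs
  refine sum_mul_log_le_sum_mul_log_self hq (fun z _ => div_pos (exp_pos _) hZ) ?_
  rw [← sum_div, div_self hZ.ne', hqs]

lemma tendsto_logSoftmax_univ_add_smul [Fintype ι] {s : Finset ι} {f g : ι → ℝ} {z : ι}
    (hz : z ∈ s) (hconst : ∀ v ∈ s, g v = g z) (hmargin : ∀ v ∉ s, g v < g z) :
    Tendsto (fun R : ℝ => logSoftmax univ (f + R • g) z) atTop (𝓝 (logSoftmax s f z)) := by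
  have hshift : ∀ R : ℝ, logSoftmax univ (f + R • g) z
      = log (exp (f z) / ∑ v, exp (f v + R * (g v - g z))) := by
    intro R
    have hfg : f + R • g = fun v => (f v + R * (g v - g z)) + R * g z := by
      ext v; simp only [Pi.add_apply, Pi.smul_apply, smul_eq_mul]; ring
    rw [hfg, logSoftmax_add_const]
    simp only [logSoftmax, sub_self, mul_zero, add_zero]
  classical
  have hnorm : Tendsto (fun R : ℝ => ∑ v, exp (f v + R * (g v - g z))) atTop
      (𝓝 (∑ v ∈ s, exp (f v))) := by
    rw [← univ_inter s, ← sum_ite_mem]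
    refine tendsto_finsetSum _ fun v _ => ?_
    by_cases hv : v ∈ s
    · simp only [hv, if_true, hconst v hv, sub_self, mul_zero, add_zero, tendsto_const_nhds]
    · rw [if_neg hv]
      exact tendsto_exp_atBot.comp (tendsto_atBot_add_const_left _ _
        (tendsto_id.atTop_mul_const_of_neg (sub_neg.mpr (hmargin v hv))))
  have hZ : 0 < ∑ v ∈ s, exp (f v) := sum_pos (fun v _ => exp_pos _) ⟨z, hz⟩
  simp only [hshift]
  exact (tendsto_const_nhds.div hnorm hZ.ne').log (div_pos (exp_pos _) hZ).ne'

end LogSoftmax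

lemma sum_filter_pos_eq_sum {ι : Type*} (s : Finset ι) {q : ι → ℝ} (hq : ∀ z, 0 ≤ q z) :
    ∑ z ∈ s with 0 < q z, q z = ∑ z ∈ s, q z :=
  sum_filter_of_ne fun z _ hz => (hq z).lt_of_ne' hz

lemma frobInner_single_one {a b : ℕ} (X : Matrix (Fin a) (Fin b) ℝ) (i : Fin a) (j : Fin b) :
    frobInner X (Matrix.single i j 1) = X i j := by
  simp [frobInner, Matrix.single_apply, ite_and, sum_ite_eq]

lemma frobInner_sub {a b : ℕ} (X A B : Matrix (Fin a) (Fin b) ℝ) :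
    frobInner X (A - B) = frobInner X A - frobInner X B := by
  simp only [frobInner, Matrix.sub_apply, mul_sub, sum_sub_distrib]

lemma apply_eq_of_forall_frobInner_Fsub_eq_zero {V m : ℕ} {p : Fin m → Fin V → ℝ}
    {L' : Matrix (Fin V) (Fin m) ℝ} (horth : ∀ Y ∈ Fsub p, frobInner L' Y = 0) {j : Fin m}
    {z z' : Fin V} (hz : 0 < p j z) (hz' : 0 < p j z') : L' z j = L' z' j := by
  have h := horth _ (Submodule.subset_span ⟨j, z, z', hz, hz', rfl⟩)
  rw [frobInner_sub, frobInner_single_one, frobInner_single_one] at h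
  linarith

lemma CEloss_eq_logSoftmax {V m : ℕ} (piv : Fin m → ℝ) (p : Fin m → Fin V → ℝ)
    (L : Matrix (Fin V) (Fin m) ℝ) :
    CEloss piv p L = - ∑ j, piv j * ∑ z ∈ univ with 0 < p j z,
      p j z * logSoftmax univ (fun v => L v j) z := rfl

lemma CEin_eq_logSoftmax {V m : ℕ} (piv : Fin m → ℝ) (p : Fin m → Fin V → ℝ)
    (L : Matrix (Fin V) (Fin m) ℝ) :
    CEin piv p L = - ∑ j, piv j * ∑ z ∈ univ with 0 < p j z,
      p j z * logSoftmax (univ.filter fun z' => 0 < p j z') (fun v => L v j) z := rfl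

theorem stmt_14_general (V m : ℕ)
    (piv : Fin m → ℝ) (hpiv : ∀ j, 0 < piv j)
    (p : Fin m → Fin V → ℝ) (hp : ∀ j z, 0 ≤ p j z) (hpsum : ∀ j, ∑ z, p j z = 1) :
    (∀ (L L' : Matrix (Fin V) (Fin m) ℝ),
        (∀ Y ∈ Fsub p, frobInner L' Y = 0) →
        (∀ j z v, 0 < p j z → ¬ 0 < p j v → 1 ≤ L' z j - L' v j) →
        Tendsto (fun R : ℝ => CEloss piv p (L + R • L')) atTop (𝓝 (CEin piv p L))) ∧
    ((∃ j, ∃ v, ¬ 0 < p j v) →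
      ∀ L : Matrix (Fin V) (Fin m) ℝ,
        entropyH piv p ≤ CEin piv p L ∧ CEin piv p L < CEloss piv p L) := by
  set S : Fin m → Finset (Fin V) := fun j => univ.filter fun z => 0 < p j z
  have hmemS : ∀ {j z}, z ∈ S j ↔ 0 < p j z := by simp [S]
  refine ⟨fun L L' horth hmargin => ?_, fun ⟨j₀, v₀, hv₀⟩ L => ?_⟩
  · simp only [CEloss_eq_logSoftmax, CEin_eq_logSoftmax]
    refine (tendsto_finsetSum _ fun j _ => (tendsto_finsetSum _ fun z hz => ?_).const_mul _).neg
    refine (tendsto_logSoftmax_univ_add_smul hz (fun v hv => ?_) fun v hv => ?_).const_mul _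
    · exact apply_eq_of_forall_frobInner_Fsub_eq_zero horth (hmemS.mp hv) (hmemS.mp hz)
    · linarith [hmargin j z v (hmemS.mp hz) (mt hmemS.mpr hv)]
  have hpS : ∀ j, ∑ z ∈ S j, p j z = 1 := fun j =>
    (sum_filter_pos_eq_sum _ (hp j)).trans (hpsum j)
  have hSne : ∀ j, (S j).Nonempty := fun j =>
    nonempty_of_sum_ne_zero (by rw [hpS j]; exact one_ne_zero)
  refine ⟨?_, ?_⟩
  · rw [CEin_eq_logSoftmax, entropyH, neg_le_neg_iff]
    exact sum_le_sum fun j _ => mul_le_mul_of_nonneg_left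
      (sum_mul_logSoftmax_le_sum_mul_log (fun z => hmemS.mp) (hpS j) _) (hpiv j).le
  · rw [CEin_eq_logSoftmax, CEloss_eq_logSoftmax, neg_lt_neg_iff]
    have hS₀ : S j₀ ⊂ univ :=
      ssubset_univ_iff.mpr fun h => hv₀ (hmemS.mp (h ▸ mem_univ v₀))
    have hrow_le : ∀ j, ∑ z ∈ S j, p j z * logSoftmax univ (fun v => L v j) z
        ≤ ∑ z ∈ S j, p j z * logSoftmax (S j) (fun v => L v j) z := fun j =>
      sum_le_sum fun z _ => mul_le_mul_of_nonneg_left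
        (logSoftmax_le_of_subset (hSne j) (subset_univ _) _ _) (hp j z)
    have hrow_lt : ∑ z ∈ S j₀, p j₀ z * logSoftmax univ (fun v => L v j₀) z
        < ∑ z ∈ S j₀, p j₀ z * logSoftmax (S j₀) (fun v => L v j₀) z :=
      sum_lt_sum_of_nonempty (hSne j₀) fun z hz =>
        mul_lt_mul_of_pos_left (logSoftmax_lt_of_ssubset (hSne j₀) hS₀ _ _) (hmemS.mp hz)
    exact sum_lt_sum (fun j _ => mul_le_mul_of_nonneg_left (hrow_le j) (hpiv j).le)
      ⟨j₀, mem_univ _, mul_lt_mul_of_pos_left hrow_lt (hpiv j₀)⟩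

/-- for any `L` and any `L' ∈ F_⊥` satisfying the margin inequalities,
`CE(L + R L') → CE_in(L)` as `R → ∞`; moreover, under the sparsity ansatz,
`CE(L) > CE_in(L) ≥ H` for every `L`. -/
theorem stmt_14 (V m : ℕ) (hV : 2 ≤ V) (hm : 0 < m)
    (piv : Fin m → ℝ) (hpiv : ∀ j, 0 < piv j) (hpisum : ∑ j, piv j = 1)
    (p : Fin m → Fin V → ℝ) (hp : ∀ j z, 0 ≤ p j z) (hpsum : ∀ j, ∑ z, p j z = 1) :
    (∀ (L L' : Matrix (Fin V) (Fin m) ℝ),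
        (∀ Y ∈ Fsub p, frobInner L' Y = 0) →
        (∀ j z v, 0 < p j z → ¬ 0 < p j v → 1 ≤ L' z j - L' v j) →
        Tendsto (fun R : ℝ => CEloss piv p (L + R • L')) atTop (𝓝 (CEin piv p L))) ∧
    ((∃ j, ∃ v, ¬ 0 < p j v) →
      ∀ L : Matrix (Fin V) (Fin m) ℝ,
        entropyH piv p ≤ CEin piv p L ∧ CEin piv p L < CEloss piv p L) :=
  stmt_14_general V m piv hpiv p hp hpsum
end
end
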